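/- arXiv:2511.14512 — 5 statements merged into one kernel-verified Lean document; each statement's English description precedes it below -/
import Mathlib

section
/- There exists a constant C > 0 such that for all τ ∈ ℝ, all integers k, l ∈ ℤ, and all natural numbers m ≥ 1, setting Λ_m = k² + (m² + (m+1)²)/2, the complex number iτ + k² + l² − Λ_m is nonzero and |iτ + k² + l² − Λ_m|⁻¹ ≤ C / √(m² + τ²). -/
/-!
With `a = l² - (m² + (m+1)²)/2` the number in question is `a + iτ`, so it suffices that
`m ≤ |a|`. The identity `a² - (m + 1/2)² = (l² - m²)(l² - (m+1)²)` does it: the right-hand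
side is `[(l - m)(l - m - 1)] · [(l + m)(l + m + 1)]`, a product of two products of
consecutive integers, hence nonnegative.
-/

open Complex

lemma Int.mul_add_one_nonneg (n : ℤ) : 0 ≤ n * (n + 1) := by
  rcases le_or_gt 0 n with hn | hn
  · positivity
  · exact mul_nonneg_of_nonpos_of_nonpos hn.le (by omega)

lemma Int.sq_sub_sq_mul_sq_sub_add_one_sq_nonneg (l m : ℤ) :
    0 ≤ (l ^ 2 - m ^ 2) * (l ^ 2 - (m + 1) ^ 2) := by
  have key : (l ^ 2 - m ^ 2) * (l ^ 2 - (m + 1) ^ 2) =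
      (l - m - 1) * (l - m - 1 + 1) * ((l + m) * (l + m + 1)) := by ring
  rw [key]
  exact mul_nonneg (Int.mul_add_one_nonneg _) (Int.mul_add_one_nonneg _)

lemma abs_add_half_le_abs_sq_sub_half_sq_add_add_one_sq (l m : ℤ) :
    |(m : ℝ) + 1 / 2| ≤ |(l : ℝ) ^ 2 - ((m : ℝ) ^ 2 + ((m : ℝ) + 1) ^ 2) / 2| := by
  rw [← sq_le_sq, ← sub_nonneg]
  have key : ((l : ℝ) ^ 2 - ((m : ℝ) ^ 2 + ((m : ℝ) + 1) ^ 2) / 2) ^ 2 - ((m : ℝ) + 1 / 2) ^ 2 =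
      (((l ^ 2 - m ^ 2) * (l ^ 2 - (m + 1) ^ 2) : ℤ) : ℝ) := by push_cast; ring
  rw [key]
  exact_mod_cast Int.sq_sub_sq_mul_sq_sub_add_one_sq_nonneg l m

lemma Complex.sqrt_sq_add_sq_le_norm_add_mul_I {x a : ℝ} (h : |x| ≤ |a|) (y : ℝ) :
    √(x ^ 2 + y ^ 2) ≤ ‖(a : ℂ) + y * I‖ := by
  rw [norm_add_mul_I]
  exact Real.sqrt_le_sqrt (add_le_add_left (sq_le_sq.mpr h) _)

/-- There is a constant `C > 0` such that for all `τ ∈ ℝ`, `k, l ∈ ℤ` and `m ≥ 1`,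
with `Λ_m = k² + (m² + (m+1)²)/2`, the complex number `iτ + k² + l² − Λ_m` is
nonzero and `|iτ + k² + l² − Λ_m|⁻¹ ≤ C / √(m² + τ²)`. -/
theorem resolvent_bound_sqrt :
    ∃ C : ℝ, 0 < C ∧ ∀ (τ : ℝ) (k l : ℤ) (m : ℕ), 1 ≤ m →
      (Complex.I * (τ : ℂ) + (k : ℂ) ^ 2 + (l : ℂ) ^ 2 -
          ((k : ℂ) ^ 2 + ((m : ℂ) ^ 2 + ((m : ℂ) + 1) ^ 2) / 2) ≠ 0) ∧
      (‖Complex.I * (τ : ℂ) + (k : ℂ) ^ 2 + (l : ℂ) ^ 2 -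
          ((k : ℂ) ^ 2 + ((m : ℂ) ^ 2 + ((m : ℂ) + 1) ^ 2) / 2)‖)⁻¹ ≤
        C / Real.sqrt ((m : ℝ) ^ 2 + τ ^ 2) := by
  refine ⟨1, one_pos, fun τ k l m hm => ?_⟩
  set a : ℝ := (l : ℝ) ^ 2 - ((m : ℝ) ^ 2 + ((m : ℝ) + 1) ^ 2) / 2
  have hz : I * (τ : ℂ) + (k : ℂ) ^ 2 + (l : ℂ) ^ 2 -
      ((k : ℂ) ^ 2 + ((m : ℂ) ^ 2 + ((m : ℂ) + 1) ^ 2) / 2) = (a : ℂ) + τ * I := by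
    push_cast [a]; ring
  have hma : |(m : ℝ)| ≤ |a| := by
    have h := abs_add_half_le_abs_sq_sub_half_sq_add_add_one_sq l m
    push_cast at h
    exact (abs_le_abs_of_nonneg (by positivity) (by linarith)).trans h
  have hpos : 0 < √((m : ℝ) ^ 2 + τ ^ 2) := by
    have : (1 : ℝ) ≤ m := by exact_mod_cast hm
    positivity
  have hle := sqrt_sq_add_sq_le_norm_add_mul_I hma τ
  rw [hz]
  exact ⟨norm_pos_iff.mp (hpos.trans_le hle), by simpa only [one_div] using inv_anti₀ hpos hle⟩
end

section
/- For every s with 1/2 < s < 1 there exists a constant C > 0 (depending only on s) such that for all τ ∈ ℝ, all integers k ∈ ℤ, all nonzero integers l ∈ ℤ, and all natural numbers m ≥ 1, setting Λ_m = k² + (m² + (m+1)²)/2, one has |iτ + k² + l² − Λ_m|⁻¹ ≤ C / (m^{1−s} |l|^{s}). -/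
/-!
The real part of `iτ + l² − (m² + (m+1)²)/2` is half of the integer
`2l² − m² − (m+1)²`, which is at least `max m |l|` in absolute value. The weighted
AM–GM inequality then bounds `m^{1−s} |l|^s` by `max m |l|`, so `C = 2` works.
-/

open Complex

theorem Real.rpow_one_sub_mul_rpow_le_max {x y s : ℝ} (hx : 0 ≤ x) (hy : 0 ≤ y)
    (hs₀ : 0 ≤ s) (hs₁ : s ≤ 1) : x ^ (1 - s) * y ^ s ≤ max x y := by
  have h := Real.geom_mean_le_arith_mean2_weighted (sub_nonneg.2 hs₁) hs₀ hx hy (by ring)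
  nlinarith [le_max_left x y, le_max_right x y]

theorem Int.max_le_abs_two_mul_sq_sub {m n : ℤ} (hm : 0 ≤ m) (hn : 0 ≤ n) :
    max m n ≤ |2 * n ^ 2 - (m ^ 2 + (m + 1) ^ 2)| := by
  rcases le_or_gt n m with h | h
  · rw [max_eq_left h, abs_of_neg (by nlinarith)]
    nlinarith
  · rw [max_eq_right h.le, abs_of_pos (by nlinarith)]
    nlinarith

theorem max_le_two_mul_abs_sq_sub (m : ℕ) (l : ℤ) :
    max (m : ℝ) |(l : ℝ)| ≤ 2 * |(l : ℝ) ^ 2 - ((m : ℝ) ^ 2 + ((m : ℝ) + 1) ^ 2) / 2| := by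
  have h := Int.max_le_abs_two_mul_sq_sub (Int.natCast_nonneg m) (abs_nonneg l)
  rw [sq_abs] at h
  have h' : (max (m : ℤ) |l| : ℝ) ≤ |2 * (l : ℝ) ^ 2 - ((m : ℝ) ^ 2 + ((m : ℝ) + 1) ^ 2)| := by
    exact_mod_cast h
  rw [Int.cast_natCast] at h'
  calc _ ≤ _ := h'
    _ = _ := by rw [← abs_two, ← abs_mul]; ring_nf

/-- For every `1/2 < s < 1` there is a constant `C > 0` (depending only on `s`)
such that for all `τ ∈ ℝ`, `k ∈ ℤ`, nonzero `l ∈ ℤ` and `m ≥ 1`, with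
`Λ_m = k² + (m² + (m+1)²)/2`, one has `|iτ + k² + l² − Λ_m|⁻¹ ≤ C / (m^{1−s} |l|^s)`. -/
theorem resolvent_bound_fractional (s : ℝ) (hs₁ : 1 / 2 < s) (hs₂ : s < 1) :
    ∃ C : ℝ, 0 < C ∧ ∀ (τ : ℝ) (k l : ℤ) (m : ℕ), l ≠ 0 → 1 ≤ m →
      (‖Complex.I * (τ : ℂ) + (k : ℂ) ^ 2 + (l : ℂ) ^ 2 -
          ((k : ℂ) ^ 2 + ((m : ℂ) ^ 2 + ((m : ℂ) + 1) ^ 2) / 2)‖)⁻¹ ≤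
        C / ((m : ℝ) ^ (1 - s) * |(l : ℝ)| ^ s) := by
  refine ⟨2, two_pos, fun τ k l m hl _ => ?_⟩
  set x : ℝ := (l : ℝ) ^ 2 - ((m : ℝ) ^ 2 + ((m : ℝ) + 1) ^ 2) / 2
  have hz : I * τ + (k : ℂ) ^ 2 + (l : ℂ) ^ 2 - ((k : ℂ) ^ 2 + ((m : ℂ) ^ 2 + ((m : ℂ) + 1) ^ 2) / 2)
      = x + I * τ := by
    simp only [x]; push_cast; ring
  have hpos : 0 < (m : ℝ) ^ (1 - s) * |(l : ℝ)| ^ s := by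
    have : (0 : ℝ) < |(l : ℝ)| := abs_pos.2 (Int.cast_ne_zero.2 hl)
    positivity
  have hbound : (m : ℝ) ^ (1 - s) * |(l : ℝ)| ^ s / 2 ≤ ‖(x : ℂ) + I * τ‖ := by
    calc (m : ℝ) ^ (1 - s) * |(l : ℝ)| ^ s / 2 ≤ max (m : ℝ) |(l : ℝ)| / 2 := by
          gcongr
          exact Real.rpow_one_sub_mul_rpow_le_max (Nat.cast_nonneg m) (abs_nonneg _)
            (by linarith) hs₂.le
      _ ≤ |x| := by linarith [max_le_two_mul_abs_sq_sub m l]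
      _ ≤ ‖(x : ℂ) + I * τ‖ := by simpa using abs_re_le_norm ((x : ℂ) + I * τ)
  rw [hz]
  calc ‖(x : ℂ) + I * τ‖⁻¹ ≤ ((m : ℝ) ^ (1 - s) * |(l : ℝ)| ^ s / 2)⁻¹ :=
        inv_anti₀ (by positivity) hbound
    _ = _ := by rw [inv_div]
end

section
/- There exists a constant C > 0 such that for all τ ∈ ℝ, all integers k, l ∈ ℤ, and all natural numbers m ≥ 1, setting Λ_m = k² + (m² + (m+1)²)/2, one has |(iτ + k² + l² − Λ_m)⁻¹ · (k² + l²)/(Λ_m + iτ)| ≤ C / √(m² + τ²). -/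
/-!
Write `z = iτ + k² + l² − Λ_m` and `w = Λ_m + iτ` for the two denominators. The numerator
`k² + l²` is the real number `re z + re w`, so it is at most `‖z‖ + ‖w‖`, and the quotient is
at most `‖z‖⁻¹ + ‖w‖⁻¹`. Both real parts are at least `m` in absolute value — for `re z`
because no square lies strictly between `m²` and `(m+1)²` — hence both norms are at least
`√(m² + τ²)`, and `C = 2` works.
-/

theorem Int.sq_le_sq_or_add_one_sq_le (l : ℤ) {n : ℤ} (hn : 0 ≤ n) :
    l ^ 2 ≤ n ^ 2 ∨ (n + 1) ^ 2 ≤ l ^ 2 := by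
  rcases le_or_gt |l| n with h | h
  · exact Or.inl (sq_le_sq.mpr (by rwa [abs_of_nonneg hn]))
  · exact Or.inr (sq_le_sq.mpr (by rw [abs_of_nonneg (by omega)]; omega))

theorem le_abs_sq_sub_mean_sq (l : ℤ) (m : ℕ) :
    (m : ℝ) ≤ |(l : ℝ) ^ 2 - ((m : ℝ) ^ 2 + ((m : ℝ) + 1) ^ 2) / 2| := by
  rcases Int.sq_le_sq_or_add_one_sq_le l (Int.natCast_nonneg m) with h | h
  · have h' : (l : ℝ) ^ 2 ≤ (m : ℝ) ^ 2 := by exact_mod_cast h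
    rw [abs_of_neg (by nlinarith [m.cast_nonneg (α := ℝ)])]
    nlinarith
  · have h' : ((m : ℝ) + 1) ^ 2 ≤ (l : ℝ) ^ 2 := by exact_mod_cast h
    rw [abs_of_pos (by nlinarith [m.cast_nonneg (α := ℝ)])]
    nlinarith

namespace Complex

theorem sqrt_sq_add_sq_le_norm {z : ℂ} {x y : ℝ} (hx : |x| ≤ |z.re|) (hy : |y| ≤ |z.im|) :
    √(x ^ 2 + y ^ 2) ≤ ‖z‖ := by
  rw [norm_eq_sqrt_sq_add_sq, ← sq_abs x, ← sq_abs y, ← sq_abs z.re, ← sq_abs z.im]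
  gcongr

theorem norm_le_norm_add_norm_of_re_eq {a z w : ℂ} (him : a.im = 0)
    (hre : a.re = z.re + w.re) : ‖a‖ ≤ ‖z‖ + ‖w‖ :=
  calc ‖a‖ = |z.re + w.re| := by rw [← hre, abs_re_eq_norm.mpr him]
    _ ≤ |z.re| + |w.re| := abs_add_le _ _
    _ ≤ ‖z‖ + ‖w‖ := add_le_add (abs_re_le_norm z) (abs_re_le_norm w)

end Complex

theorem norm_inv_mul_div_le {𝕜 : Type*} [NormedField 𝕜] {a z w : 𝕜}
    (ha : ‖a‖ ≤ ‖z‖ + ‖w‖) : ‖z⁻¹ * (a / w)‖ ≤ ‖z‖⁻¹ + ‖w‖⁻¹ := by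
  rcases eq_or_ne z 0 with rfl | hz
  · simp
  rcases eq_or_ne w 0 with rfl | hw
  · simp
  have hz' : 0 < ‖z‖ := norm_pos_iff.mpr hz
  have hw' : 0 < ‖w‖ := norm_pos_iff.mpr hw
  calc ‖z⁻¹ * (a / w)‖ = ‖a‖ / (‖z‖ * ‖w‖) := by
        rw [norm_mul, norm_inv, norm_div]; field_simp
    _ ≤ (‖z‖ + ‖w‖) / (‖z‖ * ‖w‖) := by gcongr
    _ = ‖z‖⁻¹ + ‖w‖⁻¹ := by field_simp; ring

/-- There is a constant `C > 0` such that for all `τ ∈ ℝ`, `k, l ∈ ℤ` and `m ≥ 1`,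
with `Λ_m = k² + (m² + (m+1)²)/2`, one has
`|(iτ + k² + l² − Λ_m)⁻¹ · (k² + l²)/(Λ_m + iτ)| ≤ C / √(m² + τ²)`. -/
theorem low_to_high_bound :
    ∃ C : ℝ, 0 < C ∧ ∀ (τ : ℝ) (k l : ℤ) (m : ℕ), 1 ≤ m →
      ‖
        ((Complex.I * (τ : ℂ) + (k : ℂ) ^ 2 + (l : ℂ) ^ 2 -
            ((k : ℂ) ^ 2 + ((m : ℂ) ^ 2 + ((m : ℂ) + 1) ^ 2) / 2))⁻¹ *
          (((k : ℂ) ^ 2 + (l : ℂ) ^ 2) /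
            (((k : ℂ) ^ 2 + ((m : ℂ) ^ 2 + ((m : ℂ) + 1) ^ 2) / 2) + Complex.I * (τ : ℂ))))‖ ≤
        C / Real.sqrt ((m : ℝ) ^ 2 + τ ^ 2) := by
  refine ⟨2, two_pos, fun τ k l m hm => ?_⟩
  set z : ℂ := Complex.I * τ + (k : ℂ) ^ 2 + (l : ℂ) ^ 2 -
    ((k : ℂ) ^ 2 + ((m : ℂ) ^ 2 + ((m : ℂ) + 1) ^ 2) / 2)
  set w : ℂ := (k : ℂ) ^ 2 + ((m : ℂ) ^ 2 + ((m : ℂ) + 1) ^ 2) / 2 + Complex.I * τ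
  set r := √((m : ℝ) ^ 2 + τ ^ 2)
  have hm' : (0 : ℝ) < m := by exact_mod_cast hm
  have hr : 0 < r := Real.sqrt_pos.mpr (by positivity)
  have hz : r ≤ ‖z‖ := by
    refine Complex.sqrt_sq_add_sq_le_norm ?_ (by simp [z, pow_two])
    convert le_abs_sq_sub_mean_sq l m using 2
    · simp
    · simp [z, pow_two]
  have hw : r ≤ ‖w‖ := by
    have hre : w.re = (k : ℝ) ^ 2 + ((m : ℝ) ^ 2 + ((m : ℝ) + 1) ^ 2) / 2 := by
      simp [w, pow_two]
    refine Complex.sqrt_sq_add_sq_le_norm ?_ (by simp [w, pow_two])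
    rw [hre, abs_of_nonneg m.cast_nonneg, abs_of_nonneg (by positivity)]
    nlinarith [sq_nonneg (k : ℝ)]
  have hnum : ‖(k : ℂ) ^ 2 + (l : ℂ) ^ 2‖ ≤ ‖z‖ + ‖w‖ :=
    Complex.norm_le_norm_add_norm_of_re_eq (by simp [pow_two]) (by simp [z, w, pow_two]; ring)
  calc _ ≤ ‖z‖⁻¹ + ‖w‖⁻¹ := norm_inv_mul_div_le hnum
    _ ≤ r⁻¹ + r⁻¹ := by gcongr
    _ = 2 / r := by ring
end

section
/- Let U, f₀, g₀ be C¹ periodic functions on 𝕋 = [−π,π] and for t ≥ 0 define ρ(t,x,y) = f₀(y) sin(x + tU(y)) + g₀(y) cos(x + tU(y)) on 𝕋² (this is the solution of ∂_t ρ + U(y)∂_x ρ = 0 with initial data f₀(y) sin x + g₀(y) cos x). Then for all t ≥ 0, ‖ρ(t,·)‖²_{H¹(𝕋²)} = ‖ρ(0,·)‖²_{H¹(𝕋²)} + 2πt ∫_{−π}^{π} U′(y)[f₀(y)g₀′(y) − f₀′(y)g₀(y)] dy + πt² ∫_{−π}^{π} [(U′(y)f₀(y))² + (U′(y)g₀(y))²]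 dy. -/
/-! For fixed `y`, the functions `ρ`, `∂ₓρ` and `∂_yρ` are all of the form
`a sin (x + tU(y)) + b cos (x + tU(y))`, whose square integrates over a period in `x` to
`π (a² + b²)`. Since `∂_yρ` has coefficients `f₀′ − tU′g₀` and `g₀′ + tU′f₀`, after exchanging
the order of integration the squared `H¹` norm is the integral in `y` of
`π (2 (f₀² + g₀²) + (f₀′ − tU′g₀)² + (g₀′ + tU′f₀)²)`, a quadratic polynomial in `t`. -/

open Real MeasureTheory intervalIntegral

noncomputable section

/-- Squared `H¹` norm on the torus `𝕋² = [−π,π]²`: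
`‖ρ‖²_{H¹} = ∫_{𝕋²} (ρ² + (∂_x ρ)² + (∂_y ρ)²) dx dy`. -/
def h1NormSq (ρ : ℝ → ℝ → ℝ) : ℝ :=
  ∫ x in (-π)..π, ∫ y in (-π)..π,
    ((ρ x y) ^ 2 + (deriv (fun x' => ρ x' y) x) ^ 2 + (deriv (fun y' => ρ x y') y) ^ 2)

/-- Solution of `∂_t ρ + U(y) ∂_x ρ = 0` with initial data `f₀(y) sin x + g₀(y) cos x`. -/
def shearSol (U f₀ g₀ : ℝ → ℝ) (t x y : ℝ) : ℝ :=
  f₀ y * Real.sin (x + t * U y) + g₀ y * Real.cos (x + t * U y)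

theorem intervalIntegral_integral_swap_of_continuous {E : Type*} [NormedAddCommGroup E]
    [NormedSpace ℝ E] {a b c d : ℝ} (hab : a ≤ b) (hcd : c ≤ d) {F : ℝ → ℝ → E}
    (hF : Continuous (Function.uncurry F)) :
    ∫ x in a..b, ∫ y in c..d, F x y = ∫ y in c..d, ∫ x in a..b, F x y := by
  have hF_int : Integrable (Function.uncurry F)
      ((volume.restrict (Set.Ioc a b)).prod (volume.restrict (Set.Ioc c d))) := by
    rw [Measure.prod_restrict]
    exact (hF.continuousOn.integrableOn_compact (isCompact_Icc.prod isCompact_Icc)).mono_set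
      (Set.prod_mono Set.Ioc_subset_Icc_self Set.Ioc_subset_Icc_self)
  simp only [integral_of_le hab, integral_of_le hcd]
  exact integral_integral_swap hF_int

theorem integral_sq_sin_add_cos (a b c : ℝ) :
    ∫ x in (-π)..π, (a * sin (x + c) + b * cos (x + c)) ^ 2 = π * (a ^ 2 + b ^ 2) := by
  have expand : ∀ x, (a * sin x + b * cos x) ^ 2 =
      a ^ 2 * sin x ^ 2 + 2 * a * b * (sin x * cos x) + b ^ 2 * cos x ^ 2 := fun x => by ring
  have hint : ∀ f : ℝ → ℝ, Continuous f → IntervalIntegrable f volume (c - π) (c + π) :=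
    fun f hf => hf.intervalIntegrable _ _
  rw [integral_comp_add_right (fun x => (a * sin x + b * cos x) ^ 2), neg_add_eq_sub,
    add_comm π c]
  simp only [expand]
  rw [intervalIntegral.integral_add (hint _ (by fun_prop)) (hint _ (by fun_prop)),
    intervalIntegral.integral_add (hint _ (by fun_prop)) (hint _ (by fun_prop)),
    intervalIntegral.integral_const_mul, intervalIntegral.integral_const_mul,
    intervalIntegral.integral_const_mul, integral_sin_sq, integral_sin_mul_cos₁, integral_cos_sq]
  simp only [sin_add_pi, sin_sub_pi, cos_add_pi, cos_sub_pi]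
  ring

theorem hasDerivAt_shearSol_x (U f₀ g₀ : ℝ → ℝ) (t x y : ℝ) :
    HasDerivAt (fun x' => shearSol U f₀ g₀ t x' y)
      (-g₀ y * sin (x + t * U y) + f₀ y * cos (x + t * U y)) x := by
  have hθ : HasDerivAt (fun x' : ℝ => x' + t * U y) 1 x := (hasDerivAt_id x).add_const _
  exact ((hθ.sin.const_mul (f₀ y)).add (hθ.cos.const_mul (g₀ y))).congr_deriv (by ring)

theorem hasDerivAt_shearSol_y {U f₀ g₀ : ℝ → ℝ} {U' f₀' g₀' : ℝ} {t x y : ℝ}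
    (hU : HasDerivAt U U' y) (hf₀ : HasDerivAt f₀ f₀' y) (hg₀ : HasDerivAt g₀ g₀' y) :
    HasDerivAt (fun y' => shearSol U f₀ g₀ t x y')
      ((f₀' - t * U' * g₀ y) * sin (x + t * U y) + (g₀' + t * U' * f₀ y) * cos (x + t * U y))
      y := by
  have hθ : HasDerivAt (fun y' => x + t * U y') (t * U') y := (hU.const_mul t).const_add x
  exact ((hf₀.mul hθ.sin).add (hg₀.mul hθ.cos)).congr_deriv (by ring)

section ContDiff

variable {U f₀ g₀ : ℝ → ℝ} (hU : ContDiff ℝ 1 U) (hf₀ : ContDiff ℝ 1 f₀) (hg₀ : ContDiff ℝ 1 g₀)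
include hU hf₀ hg₀

theorem h1NormSq_shearSol (t : ℝ) :
    h1NormSq (shearSol U f₀ g₀ t) =
      ∫ y in (-π)..π, π * (2 * (f₀ y ^ 2 + g₀ y ^ 2) +
        (deriv f₀ y - t * deriv U y * g₀ y) ^ 2 + (deriv g₀ y + t * deriv U y * f₀ y) ^ 2) := by
  have hd : ∀ {F : ℝ → ℝ}, ContDiff ℝ 1 F → ∀ y, HasDerivAt F (deriv F y) y :=
    fun hF y => (hF.differentiable one_ne_zero y).hasDerivAt
  have := hU.continuous; have := hf₀.continuous; have := hg₀.continuous
  have := hU.continuous_deriv le_rfl; have := hf₀.continuous_deriv le_rfl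
  have := hg₀.continuous_deriv le_rfl
  have hint : ∀ f : ℝ → ℝ, Continuous f → IntervalIntegrable f volume (-π) π :=
    fun f hf => hf.intervalIntegrable _ _
  unfold h1NormSq
  simp only [(hasDerivAt_shearSol_x U f₀ g₀ t _ _).deriv,
    (hasDerivAt_shearSol_y (hd hU _) (hd hf₀ _) (hd hg₀ _)).deriv]
  rw [intervalIntegral_integral_swap_of_continuous (by linarith [pi_pos]) (by linarith [pi_pos])
    (by simp only [Function.uncurry_def, shearSol]; fun_prop)]
  refine integral_congr fun y _ => ?_
  simp only [shearSol]
  rw [intervalIntegral.integral_add (hint _ (by fun_prop)) (hint _ (by fun_prop)),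
    intervalIntegral.integral_add (hint _ (by fun_prop)) (hint _ (by fun_prop)),
    integral_sq_sin_add_cos, integral_sq_sin_add_cos, integral_sq_sin_add_cos]
  ring

theorem h1NormSq_shearSol_eq_quadratic (t : ℝ) :
    h1NormSq (shearSol U f₀ g₀ t) =
      π * (∫ y in (-π)..π, (2 * (f₀ y ^ 2 + g₀ y ^ 2) + deriv f₀ y ^ 2 + deriv g₀ y ^ 2)) +
        2 * π * t *
          (∫ y in (-π)..π, deriv U y * (f₀ y * deriv g₀ y - deriv f₀ y * g₀ y)) +
        π * t ^ 2 *
          (∫ y in (-π)..π, ((deriv U y * f₀ y) ^ 2 + (deriv U y * g₀ y) ^ 2)) := by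
  have := hf₀.continuous; have := hg₀.continuous
  have := hU.continuous_deriv le_rfl; have := hf₀.continuous_deriv le_rfl
  have := hg₀.continuous_deriv le_rfl
  have hint : ∀ f : ℝ → ℝ, Continuous f → IntervalIntegrable f volume (-π) π :=
    fun f hf => hf.intervalIntegrable _ _
  have expand_in_t : ∀ y,
      π * (2 * (f₀ y ^ 2 + g₀ y ^ 2) + (deriv f₀ y - t * deriv U y * g₀ y) ^ 2 +
        (deriv g₀ y + t * deriv U y * f₀ y) ^ 2) =
      π * (2 * (f₀ y ^ 2 + g₀ y ^ 2) + deriv f₀ y ^ 2 + deriv g₀ y ^ 2) +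
      2 * π * t * (deriv U y * (f₀ y * deriv g₀ y - deriv f₀ y * g₀ y)) +
      π * t ^ 2 * ((deriv U y * f₀ y) ^ 2 + (deriv U y * g₀ y) ^ 2) := fun y => by ring
  rw [h1NormSq_shearSol hU hf₀ hg₀, integral_congr fun y _ => expand_in_t y,
    intervalIntegral.integral_add (hint _ (by fun_prop)) (hint _ (by fun_prop)),
    intervalIntegral.integral_add (hint _ (by fun_prop)) (hint _ (by fun_prop)),
    intervalIntegral.integral_const_mul, intervalIntegral.integral_const_mul,
    intervalIntegral.integral_const_mul]

end ContDiff

theorem h1_norm_evolution_general (U f₀ g₀ : ℝ → ℝ)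
    (hU : ContDiff ℝ 1 U) (hf₀ : ContDiff ℝ 1 f₀) (hg₀ : ContDiff ℝ 1 g₀) :
    ∀ t : ℝ, 0 ≤ t →
      h1NormSq (shearSol U f₀ g₀ t) =
        h1NormSq (shearSol U f₀ g₀ 0) +
          2 * π * t *
            (∫ y in (-π)..π, deriv U y * (f₀ y * deriv g₀ y - deriv f₀ y * g₀ y)) +
          π * t ^ 2 *
            (∫ y in (-π)..π, ((deriv U y * f₀ y) ^ 2 + (deriv U y * g₀ y) ^ 2)) := by
  intro t _
  rw [h1NormSq_shearSol_eq_quadratic hU hf₀ hg₀ t, h1NormSq_shearSol_eq_quadratic hU hf₀ hg₀ 0]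
  ring

/-- Exact evolution of the `H¹` norm of `ρ(t,x,y) = f₀(y) sin(x + tU(y)) + g₀(y) cos(x + tU(y))`:
`‖ρ(t)‖²_{H¹} = ‖ρ(0)‖²_{H¹} + 2πt ∫ U′(f₀ g₀′ − f₀′ g₀) + πt² ∫ ((U′f₀)² + (U′g₀)²)`. -/
theorem h1_norm_evolution (U f₀ g₀ : ℝ → ℝ)
    (hU : ContDiff ℝ 1 U) (hf₀ : ContDiff ℝ 1 f₀) (hg₀ : ContDiff ℝ 1 g₀)
    (hUper : ∀ y, U (y + 2 * π) = U y)
    (hfper : ∀ y, f₀ (y + 2 * π) = f₀ y) (hgper : ∀ y, g₀ (y + 2 * π) = g₀ y) :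
    ∀ t : ℝ, 0 ≤ t →
      h1NormSq (shearSol U f₀ g₀ t) =
        h1NormSq (shearSol U f₀ g₀ 0) +
          2 * π * t *
            (∫ y in (-π)..π, deriv U y * (f₀ y * deriv g₀ y - deriv f₀ y * g₀ y)) +
          π * t ^ 2 *
            (∫ y in (-π)..π, ((deriv U y * f₀ y) ^ 2 + (deriv U y * g₀ y) ^ 2)) :=
  h1_norm_evolution_general U f₀ g₀ hU hf₀ hg₀
end
end

section
/- Let μ > 0, let u : [0,∞) × 𝕋² → ℝ² be a bounded (‖u‖_{L^∞} < ∞) vector field on the two-dimensional torus, and let ρ be a smooth solution of ∂_t ρ + u·∇ρ = μΔρ on 𝕋² with initial data ρ(0,·) = ρ₀ not identically zero. Then there exists a constant C > 0, depending only on μ, ‖u‖_{L^∞}, and ρ₀, such that ‖ρ(t,·)‖_{L²(𝕋²)} ≥ C exp(−C exp(Ct)) for all t ≥ 0; that is, the L² norm decays at most double-exponentially in time. -/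
open Real MeasureTheory intervalIntegral Set

noncomputable section

/-- Squared `L²` norm on the torus `𝕋² = [−π,π]²` of a periodic function. -/
def l2NormSq (f : ℝ → ℝ → ℝ) : ℝ :=
  ∫ x in (-π)..π, ∫ y in (-π)..π, (f x y) ^ 2

/-- `L²` norm on the torus `𝕋² = [−π,π]²`. -/
def l2Norm (f : ℝ → ℝ → ℝ) : ℝ := Real.sqrt (l2NormSq f)


/-- directional (partial) derivative of a function on `ℝ×ℝ×ℝ`. -/
def pd (v : ℝ × ℝ × ℝ) (f : ℝ × ℝ × ℝ → ℝ) : ℝ × ℝ × ℝ → ℝ :=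
  fun p => fderiv ℝ f p v

lemma pd_contDiff (v : ℝ × ℝ × ℝ) {f : ℝ × ℝ × ℝ → ℝ} (hf : ContDiff ℝ (⊤ : ℕ∞) f) :
    ContDiff ℝ (⊤ : ℕ∞) (pd v f) :=
  (hf.fderiv_right (m := (⊤ : ℕ∞)) (by simp)).clm_apply contDiff_const

lemma pd_continuous (v : ℝ × ℝ × ℝ) {f : ℝ × ℝ × ℝ → ℝ} (hf : ContDiff ℝ (⊤ : ℕ∞) f) :
    Continuous (pd v f) := (pd_contDiff v hf).continuous

lemma hasDerivAt_t {f : ℝ × ℝ × ℝ → ℝ} (hf : ContDiff ℝ (⊤ : ℕ∞) f) (t x y : ℝ) :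
    HasDerivAt (fun s => f (s, x, y)) (pd (1,0,0) f (t, x, y)) t := by
  have h1 : HasDerivAt (fun s : ℝ => ((s, x, y) : ℝ × ℝ × ℝ)) (((1:ℝ),(0:ℝ),(0:ℝ))) t :=
    (hasDerivAt_id t).prodMk ((hasDerivAt_const t ((x, y) : ℝ × ℝ)))
  exact ((hf.differentiable (by simp) (t,x,y)).hasFDerivAt).comp_hasDerivAt t h1

lemma hasDerivAt_x {f : ℝ × ℝ × ℝ → ℝ} (hf : ContDiff ℝ (⊤ : ℕ∞) f) (t x y : ℝ) :
    HasDerivAt (fun x' => f (t, x', y)) (pd (0,1,0) f (t, x, y)) x := by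
  have h1 : HasDerivAt (fun x' : ℝ => ((t, x', y) : ℝ × ℝ × ℝ)) (((0:ℝ),(1:ℝ),(0:ℝ))) x :=
    (hasDerivAt_const x t).prodMk ((hasDerivAt_id x).prodMk (hasDerivAt_const x y))
  exact ((hf.differentiable (by simp) (t,x,y)).hasFDerivAt).comp_hasDerivAt x h1

lemma hasDerivAt_y {f : ℝ × ℝ × ℝ → ℝ} (hf : ContDiff ℝ (⊤ : ℕ∞) f) (t x y : ℝ) :
    HasDerivAt (fun y' => f (t, x, y')) (pd (0,0,1) f (t, x, y)) y := by
  have h1 : HasDerivAt (fun y' : ℝ => ((t, x, y') : ℝ × ℝ × ℝ)) (((0:ℝ),(0:ℝ),(1:ℝ))) y :=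
    (hasDerivAt_const y t).prodMk ((hasDerivAt_const y x).prodMk (hasDerivAt_id y))
  exact ((hf.differentiable (by simp) (t,x,y)).hasFDerivAt).comp_hasDerivAt y h1

lemma pd_comm {f : ℝ × ℝ × ℝ → ℝ} (hf : ContDiff ℝ (⊤ : ℕ∞) f) (v w : ℝ × ℝ × ℝ) (p : ℝ × ℝ × ℝ) :
    pd v (pd w f) p = pd w (pd v f) p := by
  have hdf : ContDiff ℝ (⊤ : ℕ∞) (fderiv ℝ f) := hf.fderiv_right (m := (⊤ : ℕ∞)) (by simp)
  have hsymm := second_derivative_symmetric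
    (f' := fderiv ℝ f) (f'' := fderiv ℝ (fderiv ℝ f) p)
    (fun y => (hf.differentiable (by simp) y).hasFDerivAt)
    ((hdf.differentiable (by simp) p).hasFDerivAt)
  have h1 : ∀ (z z' : ℝ × ℝ × ℝ) (q : ℝ × ℝ × ℝ),
      pd z (pd z' f) q = (fderiv ℝ (fderiv ℝ f) q z) z' := by
    intro z z' q
    have hunf : pd z' f = fun r => fderiv ℝ f r z' := rfl
    have h : fderiv ℝ (fun r => fderiv ℝ f r z') q
        = ((fderiv ℝ (fderiv ℝ f) q).flip z') := by
      have := fderiv_clm_apply (c := fderiv ℝ f) (u := fun _ => z')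
        (hdf.differentiable (by simp) q) (differentiableAt_const z')
      simpa using this
    show fderiv ℝ (pd z' f) q z = _
    rw [hunf, h]
    rfl
  rw [h1 v w p, h1 w v p, hsymm v w]

lemma pd_periodic {f : ℝ × ℝ × ℝ → ℝ} (hf : ContDiff ℝ (⊤ : ℕ∞) f) (c : ℝ × ℝ × ℝ)
    (hper : ∀ p, f (p + c) = f p) (v p) : pd v f (p + c) = pd v f p := by
  have h1 : HasFDerivAt (fun q => f (q + c)) (fderiv ℝ f (p + c)) p := by
    have := ((hf.differentiable (by simp) (p + c)).hasFDerivAt).comp p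
      ((hasFDerivAt_id p).add_const c)
    exact this
  have h2 : (fun q => f (q + c)) = f := funext hper
  rw [h2] at h1
  have : fderiv ℝ f p = fderiv ℝ f (p + c) := by
    rw [h1.fderiv]
  simp only [pd, this]

/-- the measure on the torus fundamental domain. -/
def νT : Measure (ℝ × ℝ) :=
  (volume.restrict (Ioc (-π) π)).prod (volume.restrict (Ioc (-π) π))

instance : IsFiniteMeasure νT := by
  unfold νT
  have : IsFiniteMeasure (volume.restrict (Ioc (-π) π)) := by
    constructor
    simp [Real.volume_Ioc]
  infer_instance

instance : SigmaFinite (volume.restrict (Ioc (-π) π)) := by infer_instance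

/-- torus integral -/
def TI (g : ℝ × ℝ → ℝ) : ℝ := ∫ p, g p ∂νT

lemma νT_eq : νT = (volume.prod volume).restrict (Ioc (-π) π ×ˢ Ioc (-π) π) := by
  unfold νT; rw [Measure.prod_restrict]

lemma TI_integrable {g : ℝ × ℝ → ℝ} (hg : Continuous g) : Integrable g νT := by
  rw [νT_eq]
  have h1 : IntegrableOn g (Icc (-π) π ×ˢ Icc (-π) π) (volume.prod volume) :=
    hg.continuousOn.integrableOn_compact (isCompact_Icc.prod isCompact_Icc)
  exact h1.mono_set (prod_mono Ioc_subset_Icc_self Ioc_subset_Icc_self)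

lemma TI_eq_iterated {g : ℝ × ℝ → ℝ} (hg : Continuous g) :
    TI g = ∫ x in (-π)..π, ∫ y in (-π)..π, g (x, y) := by
  have hle : (-π : ℝ) ≤ π := by linarith [pi_pos]
  rw [TI, νT, MeasureTheory.integral_prod _ (by rw [← νT]; exact TI_integrable hg)]
  rw [intervalIntegral.integral_of_le hle]
  congr 1
  ext x
  rw [intervalIntegral.integral_of_le hle]

lemma TI_eq_swap {g : ℝ × ℝ → ℝ} (hg : Continuous g) :
    TI g = ∫ y in (-π)..π, ∫ x in (-π)..π, g (x, y) := by
  have hle : (-π : ℝ) ≤ π := by linarith [pi_pos]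
  rw [TI, νT, MeasureTheory.integral_prod_symm _ (by rw [← νT]; exact TI_integrable hg)]
  rw [intervalIntegral.integral_of_le hle]
  congr 1
  ext y
  rw [intervalIntegral.integral_of_le hle]

lemma TI_add {g h : ℝ × ℝ → ℝ} (hg : Continuous g) (hh : Continuous h) :
    TI (fun p => g p + h p) = TI g + TI h :=
  integral_add (TI_integrable hg) (TI_integrable hh)

lemma TI_sub {g h : ℝ × ℝ → ℝ} (hg : Continuous g) (hh : Continuous h) :
    TI (fun p => g p - h p) = TI g - TI h :=
  integral_sub (TI_integrable hg) (TI_integrable hh)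

lemma TI_const_mul (c : ℝ) (g : ℝ × ℝ → ℝ) :
    TI (fun p => c * g p) = c * TI g := by exact integral_const_mul c g

lemma TI_neg (g : ℝ × ℝ → ℝ) : TI (fun p => -g p) = -TI g := integral_neg g

lemma TI_nonneg {g : ℝ × ℝ → ℝ} (hg : ∀ p, 0 ≤ g p) : 0 ≤ TI g :=
  integral_nonneg hg

lemma TI_mono {g h : ℝ × ℝ → ℝ} (hg : Continuous g) (hh : Continuous h)
    (hle : ∀ p, g p ≤ h p) : TI g ≤ TI h :=
  integral_mono (TI_integrable hg) (TI_integrable hh) hle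

/-- Cauchy–Schwarz for the torus integral. -/
lemma TI_cauchy_schwarz {g h : ℝ × ℝ → ℝ} (hg : Continuous g) (hh : Continuous h) :
    TI (fun p => g p * h p) ≤ Real.sqrt (TI (fun p => g p ^ 2)) * Real.sqrt (TI (fun p => h p ^ 2)) := by
  set A := TI (fun p => g p ^ 2) with hA
  set B := TI (fun p => h p ^ 2) with hB
  set Cc := TI (fun p => g p * h p) with hC
  have hA0 : 0 ≤ A := TI_nonneg (fun p => sq_nonneg _)
  have hB0 : 0 ≤ B := TI_nonneg (fun p => sq_nonneg _)
  rcases eq_or_lt_of_le hB0 with hBz | hBpos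
  · -- B = 0 : h = 0 a.e.
    have hint : Integrable (fun p => h p ^ 2) νT := TI_integrable (by continuity)
    have hzero : (fun p => h p ^ 2) =ᵐ[νT] 0 := by
      rw [← integral_eq_zero_iff_of_nonneg (fun p => sq_nonneg (h p)) hint]
      exact hBz.symm
    have hgh : (fun p => g p * h p) =ᵐ[νT] 0 := by
      filter_upwards [hzero] with p hp
      have hhp : h p = 0 := by
        have h2 : h p ^ 2 = 0 := hp
        exact pow_eq_zero_iff (n := 2) (by norm_num) |>.mp h2
      simp [hhp]
    have : Cc = 0 := by
      rw [hC, TI, integral_congr_ae hgh]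
      simp
    rw [this, ← hBz]
    simp [Real.sqrt_nonneg, mul_nonneg, Real.sqrt_nonneg]
  · -- B > 0
    set l := Cc / B with hl
    have key : 0 ≤ TI (fun p => (g p - l * h p) ^ 2) := TI_nonneg (fun p => sq_nonneg _)
    have expand : TI (fun p => (g p - l * h p) ^ 2) = A - 2 * l * Cc + l ^ 2 * B := by
      have e1 : (fun p => (g p - l * h p) ^ 2)
          = fun p => (g p ^ 2 - (2 * l) * (g p * h p)) + l ^ 2 * h p ^ 2 := by
        funext p; ring
      rw [e1, TI_add (by continuity) (by continuity), TI_sub (by continuity) (by continuity),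
        TI_const_mul, TI_const_mul, ← hA, ← hB, ← hC]
    have hCsq : Cc ^ 2 ≤ A * B := by
      rw [expand] at key
      have e1 : 2 * l * Cc = 2 * (Cc ^ 2 / B) := by rw [hl]; ring
      have e2 : l ^ 2 * B = Cc ^ 2 / B := by rw [hl]; field_simp
      rw [e1, e2] at key
      have : Cc ^ 2 / B ≤ A := by linarith
      rw [div_le_iff₀ hBpos] at this
      linarith
    calc Cc ≤ |Cc| := le_abs_self _
    _ = Real.sqrt (Cc ^ 2) := (Real.sqrt_sq_eq_abs Cc).symm
    _ ≤ Real.sqrt (A * B) := Real.sqrt_le_sqrt hCsq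
    _ = Real.sqrt A * Real.sqrt B := Real.sqrt_mul hA0 B
open Metric in
lemma bounded_of_periodic {H : ℝ × ℝ × ℝ → ℝ} (hH : Continuous H)
    (hpx : ∀ t x y, H (t, x + 2 * π, y) = H (t, x, y))
    (hpy : ∀ t x y, H (t, x, y + 2 * π) = H (t, x, y)) (a b : ℝ) :
    ∃ Cb : ℝ, ∀ t ∈ Icc a b, ∀ x y, |H (t, x, y)| ≤ Cb := by
  have hK : IsCompact ((Icc a b ×ˢ (Icc (-π) π ×ˢ Icc (-π) π)) : Set (ℝ × ℝ × ℝ)) :=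
    isCompact_Icc.prod (isCompact_Icc.prod isCompact_Icc)
  obtain ⟨Cb, hCb⟩ := hK.exists_bound_of_continuousOn hH.continuousOn
  refine ⟨Cb, fun t ht x y => ?_⟩
  have h2π : (0:ℝ) < 2 * π := by positivity
  have hx : Function.Periodic (fun x' => H (t, x', y)) (2 * π) := fun x' => hpx t x' y
  obtain ⟨x₀, hx₀, hx₀e⟩ := hx.exists_mem_Ico h2π x (-π)
  have hy : Function.Periodic (fun y' => H (t, x₀, y')) (2 * π) := fun y' => hpy t x₀ y'
  obtain ⟨y₀, hy₀, hy₀e⟩ := hy.exists_mem_Ico h2π y (-π)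
  have hxI : x₀ ∈ Icc (-π) π := by
    rw [show -π + 2 * π = π by ring] at hx₀
    exact Ico_subset_Icc_self hx₀
  have hyI : y₀ ∈ Icc (-π) π := by
    rw [show -π + 2 * π = π by ring] at hy₀
    exact Ico_subset_Icc_self hy₀
  have : H (t, x, y) = H (t, x₀, y₀) := by rw [hx₀e, hy₀e]
  rw [this]
  have := hCb (t, x₀, y₀) ⟨ht, hxI, hyI⟩
  simpa [Real.norm_eq_abs] using this

open Metric in
/-- differentiation under the torus integral. -/
lemma hasDerivAt_TI {G : ℝ × ℝ × ℝ → ℝ} (hG : ContDiff ℝ (⊤ : ℕ∞) G)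
    (hpx : ∀ t x y, G (t, x + 2 * π, y) = G (t, x, y))
    (hpy : ∀ t x y, G (t, x, y + 2 * π) = G (t, x, y)) (t₀ : ℝ) :
    HasDerivAt (fun t => TI (fun p => G (t, p.1, p.2)))
      (TI (fun p => pd (1,0,0) G (t₀, p.1, p.2))) t₀ := by
  have hGc : Continuous G := hG.continuous
  have hH : Continuous (pd (1,0,0) G) := pd_continuous _ hG
  have hHpx : ∀ t x y, pd (1,0,0) G (t, x + 2*π, y) = pd (1,0,0) G (t, x, y) := by
    intro t x y
    have := pd_periodic hG ((0 : ℝ), (2*π : ℝ), (0:ℝ))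
      (fun p => by obtain ⟨a, b, c⟩ := p; simpa [Prod.mk_add_mk] using hpx a b c) (1,0,0) (t,x,y)
    simpa [Prod.mk_add_mk] using this
  have hHpy : ∀ t x y, pd (1,0,0) G (t, x, y + 2*π) = pd (1,0,0) G (t, x, y) := by
    intro t x y
    have := pd_periodic hG ((0 : ℝ), (0 : ℝ), (2*π:ℝ))
      (fun p => by obtain ⟨a, b, c⟩ := p; simpa [Prod.mk_add_mk] using hpy a b c) (1,0,0) (t,x,y)
    simpa [Prod.mk_add_mk] using this
  obtain ⟨Cb, hCb⟩ := bounded_of_periodic hH hHpx hHpy (t₀ - 1) (t₀ + 1)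
  have key := hasDerivAt_integral_of_dominated_loc_of_deriv_le
    (F := fun t (p : ℝ × ℝ) => G (t, p.1, p.2))
    (F' := fun t (p : ℝ × ℝ) => pd (1,0,0) G (t, p.1, p.2))
    (μ := νT) (x₀ := t₀) (bound := fun _ => Cb) (s := ball t₀ 1) (ball_mem_nhds t₀ one_pos)
    (Filter.Eventually.of_forall fun t =>
      ((hGc.comp (by continuity)).aestronglyMeasurable))
    (TI_integrable (hGc.comp (by continuity)))
    ((hH.comp (by continuity)).aestronglyMeasurable)
    (Filter.Eventually.of_forall fun p => fun t ht => by
      have : t ∈ Icc (t₀ - 1) (t₀ + 1) := by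
        rw [mem_ball, Real.dist_eq] at ht
        constructor <;> [linarith [abs_lt.mp ht|>.1]; linarith [abs_lt.mp ht|>.2]]
      simpa [Real.norm_eq_abs] using hCb t this p.1 p.2)
    (integrable_const Cb)
    (Filter.Eventually.of_forall fun p => fun t _ => hasDerivAt_t hG t p.1 p.2)
  exact key.2
lemma pd_perx {f : ℝ × ℝ × ℝ → ℝ} (hf : ContDiff ℝ (⊤ : ℕ∞) f)
    (hpx : ∀ t x y, f (t, x + 2 * π, y) = f (t, x, y)) (v : ℝ × ℝ × ℝ) :
    ∀ t x y, pd v f (t, x + 2 * π, y) = pd v f (t, x, y) := by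
  intro t x y
  have := pd_periodic hf ((0 : ℝ), (2*π : ℝ), (0:ℝ))
    (fun p => by obtain ⟨a, b, c⟩ := p; simpa [Prod.mk_add_mk] using hpx a b c) v (t,x,y)
  simpa [Prod.mk_add_mk] using this

lemma pd_pery {f : ℝ × ℝ × ℝ → ℝ} (hf : ContDiff ℝ (⊤ : ℕ∞) f)
    (hpy : ∀ t x y, f (t, x, y + 2 * π) = f (t, x, y)) (v : ℝ × ℝ × ℝ) :
    ∀ t x y, pd v f (t, x, y + 2 * π) = pd v f (t, x, y) := by
  intro t x y
  have := pd_periodic hf ((0 : ℝ), (0 : ℝ), (2*π:ℝ))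
    (fun p => by obtain ⟨a, b, c⟩ := p; simpa [Prod.mk_add_mk] using hpy a b c) v (t,x,y)
  simpa [Prod.mk_add_mk] using this

/-- periodic integration by parts in the `x` variable. -/
lemma parts_x {f g : ℝ × ℝ × ℝ → ℝ} (hf : ContDiff ℝ (⊤ : ℕ∞) f) (hg : ContDiff ℝ (⊤ : ℕ∞) g)
    (hfpx : ∀ t x y, f (t, x + 2 * π, y) = f (t, x, y))
    (hgpx : ∀ t x y, g (t, x + 2 * π, y) = g (t, x, y)) (t y : ℝ) :
    ∫ x in (-π)..π, f (t, x, y) * pd (0,1,0) g (t, x, y)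
      = - ∫ x in (-π)..π, pd (0,1,0) f (t, x, y) * g (t, x, y) := by
  have hder : ∀ x ∈ uIcc (-π) π, HasDerivAt (fun x' => f (t, x', y)) (pd (0,1,0) f (t,x,y)) x :=
    fun x _ => hasDerivAt_x hf t x y
  have hder' : ∀ x ∈ uIcc (-π) π, HasDerivAt (fun x' => g (t, x', y)) (pd (0,1,0) g (t,x,y)) x :=
    fun x _ => hasDerivAt_x hg t x y
  have hint1 : IntervalIntegrable (fun x => pd (0,1,0) f (t,x,y)) volume (-π) π :=
    ((pd_continuous _ hf).comp (by continuity)).intervalIntegrable _ _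
  have hint2 : IntervalIntegrable (fun x => pd (0,1,0) g (t,x,y)) volume (-π) π :=
    ((pd_continuous _ hg).comp (by continuity)).intervalIntegrable _ _
  have key := intervalIntegral.integral_deriv_mul_eq_sub hder hder' hint1 hint2
  have hb : f (t, π, y) * g (t, π, y) - f (t, -π, y) * g (t, -π, y) = 0 := by
    have h1 : f (t, π, y) = f (t, -π, y) := by
      have := hfpx t (-π) y; rw [show -π + 2 * π = π by ring] at this; exact this
    have h2 : g (t, π, y) = g (t, -π, y) := by
      have := hgpx t (-π) y; rw [show -π + 2 * π = π by ring] at this; exact this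
    rw [h1, h2]; ring
  rw [hb] at key
  have ig1 : IntervalIntegrable (fun x => pd (0,1,0) f (t,x,y) * g (t,x,y)) volume (-π) π :=
    (((pd_continuous _ hf).comp (by continuity : Continuous fun x : ℝ => ((t,x,y) : ℝ×ℝ×ℝ))).mul
      (hg.continuous.comp (by continuity))).intervalIntegrable _ _
  have ig2 : IntervalIntegrable (fun x => f (t,x,y) * pd (0,1,0) g (t,x,y)) volume (-π) π :=
    ((hf.continuous.comp (by continuity : Continuous fun x : ℝ => ((t,x,y) : ℝ×ℝ×ℝ))).mul
      ((pd_continuous _ hg).comp (by continuity))).intervalIntegrable _ _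
  rw [intervalIntegral.integral_add ig1 ig2] at key
  linarith

/-- periodic integration by parts in the `y` variable. -/
lemma parts_y {f g : ℝ × ℝ × ℝ → ℝ} (hf : ContDiff ℝ (⊤ : ℕ∞) f) (hg : ContDiff ℝ (⊤ : ℕ∞) g)
    (hfpy : ∀ t x y, f (t, x, y + 2 * π) = f (t, x, y))
    (hgpy : ∀ t x y, g (t, x, y + 2 * π) = g (t, x, y)) (t x : ℝ) :
    ∫ y in (-π)..π, f (t, x, y) * pd (0,0,1) g (t, x, y)
      = - ∫ y in (-π)..π, pd (0,0,1) f (t, x, y) * g (t, x, y) := by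
  have hder : ∀ y ∈ uIcc (-π) π, HasDerivAt (fun y' => f (t, x, y')) (pd (0,0,1) f (t,x,y)) y :=
    fun y _ => hasDerivAt_y hf t x y
  have hder' : ∀ y ∈ uIcc (-π) π, HasDerivAt (fun y' => g (t, x, y')) (pd (0,0,1) g (t,x,y)) y :=
    fun y _ => hasDerivAt_y hg t x y
  have hint1 : IntervalIntegrable (fun y => pd (0,0,1) f (t,x,y)) volume (-π) π :=
    ((pd_continuous _ hf).comp (by continuity)).intervalIntegrable _ _
  have hint2 : IntervalIntegrable (fun y => pd (0,0,1) g (t,x,y)) volume (-π) π :=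
    ((pd_continuous _ hg).comp (by continuity)).intervalIntegrable _ _
  have key := intervalIntegral.integral_deriv_mul_eq_sub hder hder' hint1 hint2
  have hb : f (t, x, π) * g (t, x, π) - f (t, x, -π) * g (t, x, -π) = 0 := by
    have h1 : f (t, x, π) = f (t, x, -π) := by
      have := hfpy t x (-π); rw [show -π + 2 * π = π by ring] at this; exact this
    have h2 : g (t, x, π) = g (t, x, -π) := by
      have := hgpy t x (-π); rw [show -π + 2 * π = π by ring] at this; exact this
    rw [h1, h2]; ring
  rw [hb] at key
  have ig1 : IntervalIntegrable (fun y => pd (0,0,1) f (t,x,y) * g (t,x,y)) volume (-π) π :=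
    (((pd_continuous _ hf).comp (by continuity : Continuous fun y : ℝ => ((t,x,y) : ℝ×ℝ×ℝ))).mul
      (hg.continuous.comp (by continuity))).intervalIntegrable _ _
  have ig2 : IntervalIntegrable (fun y => f (t,x,y) * pd (0,0,1) g (t,x,y)) volume (-π) π :=
    ((hf.continuous.comp (by continuity : Continuous fun y : ℝ => ((t,x,y) : ℝ×ℝ×ℝ))).mul
      ((pd_continuous _ hg).comp (by continuity))).intervalIntegrable _ _
  rw [intervalIntegral.integral_add ig1 ig2] at key
  linarith

/-- torus-level integration by parts in `x`. -/
lemma TI_parts_x {f g : ℝ × ℝ × ℝ → ℝ} (hf : ContDiff ℝ (⊤ : ℕ∞) f) (hg : ContDiff ℝ (⊤ : ℕ∞) g)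
    (hfpx : ∀ t x y, f (t, x + 2 * π, y) = f (t, x, y))
    (hgpx : ∀ t x y, g (t, x + 2 * π, y) = g (t, x, y)) (t : ℝ) :
    TI (fun p => f (t, p.1, p.2) * pd (0,1,0) g (t, p.1, p.2))
      = - TI (fun p => pd (0,1,0) f (t, p.1, p.2) * g (t, p.1, p.2)) := by
  have c1 : Continuous (fun p : ℝ × ℝ => f (t, p.1, p.2) * pd (0,1,0) g (t, p.1, p.2)) := by
    exact ((hf.continuous.comp (by continuity)).mul ((pd_continuous _ hg).comp (by continuity)))
  have c2 : Continuous (fun p : ℝ × ℝ => pd (0,1,0) f (t, p.1, p.2) * g (t, p.1, p.2)) := by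
    exact (((pd_continuous _ hf).comp (by continuity)).mul (hg.continuous.comp (by continuity)))
  rw [TI_eq_swap c1, TI_eq_swap c2, ← intervalIntegral.integral_neg]
  apply intervalIntegral.integral_congr
  intro y _
  exact parts_x hf hg hfpx hgpx t y

/-- torus-level integration by parts in `y`. -/
lemma TI_parts_y {f g : ℝ × ℝ × ℝ → ℝ} (hf : ContDiff ℝ (⊤ : ℕ∞) f) (hg : ContDiff ℝ (⊤ : ℕ∞) g)
    (hfpy : ∀ t x y, f (t, x, y + 2 * π) = f (t, x, y))
    (hgpy : ∀ t x y, g (t, x, y + 2 * π) = g (t, x, y)) (t : ℝ) :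
    TI (fun p => f (t, p.1, p.2) * pd (0,0,1) g (t, p.1, p.2))
      = - TI (fun p => pd (0,0,1) f (t, p.1, p.2) * g (t, p.1, p.2)) := by
  have c1 : Continuous (fun p : ℝ × ℝ => f (t, p.1, p.2) * pd (0,0,1) g (t, p.1, p.2)) := by
    exact ((hf.continuous.comp (by continuity)).mul ((pd_continuous _ hg).comp (by continuity)))
  have c2 : Continuous (fun p : ℝ × ℝ => pd (0,0,1) f (t, p.1, p.2) * g (t, p.1, p.2)) := by
    exact (((pd_continuous _ hf).comp (by continuity)).mul (hg.continuous.comp (by continuity)))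
  rw [TI_eq_iterated c1, TI_eq_iterated c2, ← intervalIntegral.integral_neg]
  apply intervalIntegral.integral_congr
  intro x _
  exact parts_y hf hg hfpy hgpy t x
lemma pd_add {f g : ℝ × ℝ × ℝ → ℝ} (hf : ContDiff ℝ (⊤ : ℕ∞) f) (hg : ContDiff ℝ (⊤ : ℕ∞) g)
    (v p : ℝ × ℝ × ℝ) : pd v (fun q => f q + g q) p = pd v f p + pd v g p := by
  show fderiv ℝ (fun q => f q + g q) p v = _
  rw [fderiv_fun_add (hf.differentiable (by simp) p) (hg.differentiable (by simp) p)]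
  rfl

lemma pd_mul {f g : ℝ × ℝ × ℝ → ℝ} (hf : ContDiff ℝ (⊤ : ℕ∞) f) (hg : ContDiff ℝ (⊤ : ℕ∞) g)
    (v p : ℝ × ℝ × ℝ) :
    pd v (fun q => f q * g q) p = f p * pd v g p + g p * pd v f p := by
  show fderiv ℝ (fun q => f q * g q) p v = _
  rw [fderiv_fun_mul (hf.differentiable (by simp) p) (hg.differentiable (by simp) p)]
  simp [pd]

lemma pd_sq {f : ℝ × ℝ × ℝ → ℝ} (hf : ContDiff ℝ (⊤ : ℕ∞) f) (v p : ℝ × ℝ × ℝ) :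
    pd v (fun q => f q ^ 2) p = 2 * f p * pd v f p := by
  have h : (fun q => f q ^ 2) = fun q => f q * f q := by funext q; ring
  rw [h, pd_mul hf hf]
  ring

lemma pd_const_mul {f : ℝ × ℝ × ℝ → ℝ} (hf : ContDiff ℝ (⊤ : ℕ∞) f) (c : ℝ) (v p : ℝ × ℝ × ℝ) :
    pd v (fun q => c * f q) p = c * pd v f p := by
  show fderiv ℝ (fun q => c * f q) p v = _
  rw [fderiv_const_mul (hf.differentiable (by simp) p)]
  rfl

lemma TI_abs_cauchy_schwarz {g h : ℝ × ℝ → ℝ} (hg : Continuous g) (hh : Continuous h) :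
    |TI (fun p => g p * h p)|
      ≤ Real.sqrt (TI (fun p => g p ^ 2)) * Real.sqrt (TI (fun p => h p ^ 2)) := by
  rw [abs_le]
  constructor
  · have := TI_cauchy_schwarz (g := fun p => -g p) (h := h) hg.neg hh
    have e1 : TI (fun p => -g p * h p) = - TI (fun p => g p * h p) := by
      rw [show (fun p => -g p * h p) = fun p => -(g p * h p) by funext p; ring, TI_neg]
    have e2 : TI (fun p => (-g p) ^ 2) = TI (fun p => g p ^ 2) := by
      congr 1; funext p; ring
    rw [e1, e2] at this
    linarith
  · exact TI_cauchy_schwarz hg hh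
/-- Laplacian -/
def lapF (F : ℝ × ℝ × ℝ → ℝ) : ℝ × ℝ × ℝ → ℝ :=
  fun q => pd (0,1,0) (pd (0,1,0) F) q + pd (0,0,1) (pd (0,0,1) F) q

/-- drift term `u · ∇ρ` recovered from the equation -/
def PF (μ : ℝ) (F : ℝ × ℝ × ℝ → ℝ) : ℝ × ℝ × ℝ → ℝ :=
  fun q => μ * lapF F q - pd (1,0,0) F q

/-- energy -/
def Et (F : ℝ × ℝ × ℝ → ℝ) : ℝ → ℝ := fun t => TI (fun p => F (t,p.1,p.2)^2)

/-- Dirichlet energy -/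
def Dt (F : ℝ × ℝ × ℝ → ℝ) : ℝ → ℝ :=
  fun t => TI (fun p => pd (0,1,0) F (t,p.1,p.2)^2 + pd (0,0,1) F (t,p.1,p.2)^2)

/-- L² norm of the Laplacian -/
def Qt (F : ℝ × ℝ × ℝ → ℝ) : ℝ → ℝ := fun t => TI (fun p => lapF F (t,p.1,p.2)^2)

lemma lapF_contDiff {F : ℝ × ℝ × ℝ → ℝ} (hFs : ContDiff ℝ (⊤ : ℕ∞) F) : ContDiff ℝ (⊤ : ℕ∞) (lapF F) :=
  (pd_contDiff _ (pd_contDiff _ hFs)).add (pd_contDiff _ (pd_contDiff _ hFs))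

lemma PF_contDiff {F : ℝ × ℝ × ℝ → ℝ} (hFs : ContDiff ℝ (⊤ : ℕ∞) F) (μ : ℝ) :
    ContDiff ℝ (⊤ : ℕ∞) (PF μ F) :=
  (contDiff_const.mul (lapF_contDiff hFs)).sub (pd_contDiff _ hFs)

section energy

variable {F : ℝ × ℝ × ℝ → ℝ} {μ : ℝ}

lemma lapF_perx (hFs : ContDiff ℝ (⊤ : ℕ∞) F)
    (hFpx : ∀ t x y, F (t, x + 2*π, y) = F (t,x,y)) :
    ∀ t x y, lapF F (t, x + 2*π, y) = lapF F (t,x,y) := by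
  intro t x y
  unfold lapF
  rw [pd_perx (pd_contDiff _ hFs) (pd_perx hFs hFpx _) _,
    pd_perx (pd_contDiff _ hFs) (pd_perx hFs hFpx _) _]

lemma lapF_pery (hFs : ContDiff ℝ (⊤ : ℕ∞) F)
    (hFpy : ∀ t x y, F (t, x, y + 2*π) = F (t,x,y)) :
    ∀ t x y, lapF F (t, x, y + 2*π) = lapF F (t,x,y) := by
  intro t x y
  unfold lapF
  rw [pd_pery (pd_contDiff _ hFs) (pd_pery hFs hFpy _) _,
    pd_pery (pd_contDiff _ hFs) (pd_pery hFs hFpy _) _]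

lemma PF_perx (hFs : ContDiff ℝ (⊤ : ℕ∞) F)
    (hFpx : ∀ t x y, F (t, x + 2*π, y) = F (t,x,y)) :
    ∀ t x y, PF μ F (t, x + 2*π, y) = PF μ F (t,x,y) := by
  intro t x y
  unfold PF
  rw [lapF_perx hFs hFpx, pd_perx hFs hFpx]

lemma PF_pery (hFs : ContDiff ℝ (⊤ : ℕ∞) F)
    (hFpy : ∀ t x y, F (t, x, y + 2*π) = F (t,x,y)) :
    ∀ t x y, PF μ F (t, x, y + 2*π) = PF μ F (t,x,y) := by
  intro t x y
  unfold PF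
  rw [lapF_pery hFs hFpy, pd_pery hFs hFpy]

/-- `∫ F ΔF = - ∫ |∇F|²`. -/
lemma Dt_eq (hFs : ContDiff ℝ (⊤ : ℕ∞) F)
    (hFpx : ∀ t x y, F (t, x + 2*π, y) = F (t,x,y))
    (hFpy : ∀ t x y, F (t, x, y + 2*π) = F (t,x,y)) (t : ℝ) :
    TI (fun p => F (t,p.1,p.2) * lapF F (t,p.1,p.2)) = - Dt F t := by
  have cmap : Continuous (fun p : ℝ × ℝ => ((t, p.1, p.2) : ℝ × ℝ × ℝ)) := by continuity
  have cF := hFs.continuous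
  have cfx := pd_continuous ((0:ℝ),(1:ℝ),(0:ℝ)) hFs
  have cfy := pd_continuous ((0:ℝ),(0:ℝ),(1:ℝ)) hFs
  have cc1 : Continuous (fun p : ℝ × ℝ =>
      F (t,p.1,p.2) * pd (0,1,0) (pd (0,1,0) F) (t,p.1,p.2)) :=
    (cF.comp cmap).mul ((pd_continuous _ (pd_contDiff _ hFs)).comp cmap)
  have cc2 : Continuous (fun p : ℝ × ℝ =>
      F (t,p.1,p.2) * pd (0,0,1) (pd (0,0,1) F) (t,p.1,p.2)) :=
    (cF.comp cmap).mul ((pd_continuous _ (pd_contDiff _ hFs)).comp cmap)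
  have e1 : (fun p : ℝ × ℝ => F (t,p.1,p.2) * lapF F (t,p.1,p.2))
      = fun p => F (t,p.1,p.2) * pd (0,1,0) (pd (0,1,0) F) (t,p.1,p.2)
        + F (t,p.1,p.2) * pd (0,0,1) (pd (0,0,1) F) (t,p.1,p.2) := by
    funext p; unfold lapF; ring
  rw [e1, TI_add cc1 cc2]
  rw [TI_parts_x hFs (pd_contDiff _ hFs) hFpx (pd_perx hFs hFpx _) t]
  rw [TI_parts_y hFs (pd_contDiff _ hFs) hFpy (pd_pery hFs hFpy _) t]
  have e2 : (fun p : ℝ × ℝ => pd (0,1,0) F (t,p.1,p.2) * pd (0,1,0) F (t,p.1,p.2))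
      = fun p : ℝ × ℝ => pd (0,1,0) F (t,p.1,p.2) ^ 2 := by funext p; ring
  have e3 : (fun p : ℝ × ℝ => pd (0,0,1) F (t,p.1,p.2) * pd (0,0,1) F (t,p.1,p.2))
      = fun p : ℝ × ℝ => pd (0,0,1) F (t,p.1,p.2) ^ 2 := by funext p; ring
  rw [e2, e3]
  unfold Dt
  have cc3 : Continuous (fun p : ℝ × ℝ => pd (0,1,0) F (t,p.1,p.2) ^ 2) :=
    ((cfx.comp cmap)).pow 2
  have cc4 : Continuous (fun p : ℝ × ℝ => pd (0,0,1) F (t,p.1,p.2) ^ 2) :=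
    ((cfy.comp cmap)).pow 2
  rw [TI_add cc3 cc4]
  ring

/-- time derivative of the energy. -/
lemma hasDerivAt_Et (hFs : ContDiff ℝ (⊤ : ℕ∞) F)
    (hFpx : ∀ t x y, F (t, x + 2*π, y) = F (t,x,y))
    (hFpy : ∀ t x y, F (t, x, y + 2*π) = F (t,x,y)) (t : ℝ) :
    HasDerivAt (Et F)
      (-(2*μ) * Dt F t - 2 * TI (fun p => F (t,p.1,p.2) * PF μ F (t,p.1,p.2))) t := by
  have cmap : Continuous (fun p : ℝ × ℝ => ((t, p.1, p.2) : ℝ × ℝ × ℝ)) := by continuity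
  have cF := hFs.continuous
  have hG : ContDiff ℝ (⊤ : ℕ∞) (fun q : ℝ × ℝ × ℝ => F q ^ 2) := hFs.pow 2
  have h0 := hasDerivAt_TI hG
    (fun t x y => by simp only [hFpx t x y]) (fun t x y => by simp only [hFpy t x y]) t
  have e1 : TI (fun p : ℝ × ℝ => pd (1,0,0) (fun q => F q ^ 2) (t,p.1,p.2))
      = -(2*μ) * Dt F t - 2 * TI (fun p => F (t,p.1,p.2) * PF μ F (t,p.1,p.2)) := by
    have e2 : (fun p : ℝ×ℝ => pd (1,0,0) (fun q => F q ^ 2) (t,p.1,p.2))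
        = fun p : ℝ×ℝ => (2*μ) * (F (t,p.1,p.2) * lapF F (t,p.1,p.2))
            - 2 * (F (t,p.1,p.2) * PF μ F (t,p.1,p.2)) := by
      funext p
      rw [pd_sq hFs]
      unfold PF
      ring
    have cc1 : Continuous (fun p : ℝ×ℝ =>
        (2*μ) * (F (t,p.1,p.2) * lapF F (t,p.1,p.2))) :=
      continuous_const.mul ((cF.comp cmap).mul ((lapF_contDiff hFs).continuous.comp cmap))
    have cc2 : Continuous (fun p : ℝ×ℝ =>
        2 * (F (t,p.1,p.2) * PF μ F (t,p.1,p.2))) :=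
      continuous_const.mul ((cF.comp cmap).mul ((PF_contDiff hFs μ).continuous.comp cmap))
    rw [e2, TI_sub cc1 cc2, TI_const_mul, TI_const_mul, Dt_eq hFs hFpx hFpy t]
    ring
  rw [← e1]
  exact h0

/-- time derivative of the Dirichlet energy. -/
lemma hasDerivAt_Dt (hFs : ContDiff ℝ (⊤ : ℕ∞) F)
    (hFpx : ∀ t x y, F (t, x + 2*π, y) = F (t,x,y))
    (hFpy : ∀ t x y, F (t, x, y + 2*π) = F (t,x,y)) (t : ℝ) :
    HasDerivAt (Dt F)
      (-(2*μ) * Qt F t + 2 * TI (fun p => lapF F (t,p.1,p.2) * PF μ F (t,p.1,p.2))) t := by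
  have cmap : Continuous (fun p : ℝ × ℝ => ((t, p.1, p.2) : ℝ × ℝ × ℝ)) := by continuity
  have hfx : ContDiff ℝ (⊤ : ℕ∞) (pd ((0:ℝ),(1:ℝ),(0:ℝ)) F) := pd_contDiff _ hFs
  have hfy : ContDiff ℝ (⊤ : ℕ∞) (pd ((0:ℝ),(0:ℝ),(1:ℝ)) F) := pd_contDiff _ hFs
  have hft : ContDiff ℝ (⊤ : ℕ∞) (pd ((1:ℝ),(0:ℝ),(0:ℝ)) F) := pd_contDiff _ hFs
  have hG : ContDiff ℝ (⊤ : ℕ∞) (fun q : ℝ×ℝ×ℝ => pd (0,1,0) F q ^ 2 + pd (0,0,1) F q ^ 2) :=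
    (hfx.pow 2).add (hfy.pow 2)
  have h0 := hasDerivAt_TI hG
    (fun t x y => by
      simp only [pd_perx hFs hFpx ((0:ℝ),(1:ℝ),(0:ℝ)) t x y,
        pd_perx hFs hFpx ((0:ℝ),(0:ℝ),(1:ℝ)) t x y])
    (fun t x y => by
      simp only [pd_pery hFs hFpy ((0:ℝ),(1:ℝ),(0:ℝ)) t x y,
        pd_pery hFs hFpy ((0:ℝ),(0:ℝ),(1:ℝ)) t x y]) t
  have e1 : TI (fun p : ℝ×ℝ =>
        pd (1,0,0) (fun q => pd (0,1,0) F q ^ 2 + pd (0,0,1) F q ^ 2) (t,p.1,p.2))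
      = -(2*μ) * Qt F t + 2 * TI (fun p => lapF F (t,p.1,p.2) * PF μ F (t,p.1,p.2)) := by
    have e2 : (fun p : ℝ×ℝ =>
          pd (1,0,0) (fun q => pd (0,1,0) F q ^ 2 + pd (0,0,1) F q ^ 2) (t,p.1,p.2))
        = fun p : ℝ×ℝ =>
            2 * (pd (0,1,0) F (t,p.1,p.2) * pd (0,1,0) (pd (1,0,0) F) (t,p.1,p.2))
          + 2 * (pd (0,0,1) F (t,p.1,p.2) * pd (0,0,1) (pd (1,0,0) F) (t,p.1,p.2)) := by
      funext p
      rw [pd_add (hfx.pow 2) (hfy.pow 2), pd_sq hfx, pd_sq hfy,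
        pd_comm hFs (1,0,0) (0,1,0), pd_comm hFs (1,0,0) (0,0,1)]
      ring
    have cc1 : Continuous (fun p : ℝ×ℝ =>
        2 * (pd (0,1,0) F (t,p.1,p.2) * pd (0,1,0) (pd (1,0,0) F) (t,p.1,p.2))) :=
      continuous_const.mul ((hfx.continuous.comp cmap).mul
        ((pd_continuous _ hft).comp cmap))
    have cc2 : Continuous (fun p : ℝ×ℝ =>
        2 * (pd (0,0,1) F (t,p.1,p.2) * pd (0,0,1) (pd (1,0,0) F) (t,p.1,p.2))) :=
      continuous_const.mul ((hfy.continuous.comp cmap).mul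
        ((pd_continuous _ hft).comp cmap))
    rw [e2, TI_add cc1 cc2, TI_const_mul, TI_const_mul]
    rw [TI_parts_x hfx hft (pd_perx hFs hFpx _) (pd_perx hFs hFpx _) t]
    rw [TI_parts_y hfy hft (pd_pery hFs hFpy _) (pd_pery hFs hFpy _) t]
    have cc3 : Continuous (fun p : ℝ×ℝ =>
        pd (0,1,0) (pd (0,1,0) F) (t,p.1,p.2) * pd (1,0,0) F (t,p.1,p.2)) :=
      ((pd_continuous _ (pd_contDiff _ hFs)).comp cmap).mul (hft.continuous.comp cmap)
    have cc4 : Continuous (fun p : ℝ×ℝ =>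
        pd (0,0,1) (pd (0,0,1) F) (t,p.1,p.2) * pd (1,0,0) F (t,p.1,p.2)) :=
      ((pd_continuous _ (pd_contDiff _ hFs)).comp cmap).mul (hft.continuous.comp cmap)
    have e3 : TI (fun p : ℝ×ℝ => pd (0,1,0) (pd (0,1,0) F) (t,p.1,p.2)
          * pd (1,0,0) F (t,p.1,p.2))
        + TI (fun p : ℝ×ℝ => pd (0,0,1) (pd (0,0,1) F) (t,p.1,p.2)
          * pd (1,0,0) F (t,p.1,p.2))
        = TI (fun p : ℝ×ℝ => lapF F (t,p.1,p.2) * pd (1,0,0) F (t,p.1,p.2)) := by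
      rw [← TI_add cc3 cc4]
      congr 1; funext p; unfold lapF; ring
    have e4 : TI (fun p : ℝ×ℝ => lapF F (t,p.1,p.2) * pd (1,0,0) F (t,p.1,p.2))
        = μ * Qt F t - TI (fun p => lapF F (t,p.1,p.2) * PF μ F (t,p.1,p.2)) := by
      have e5 : (fun p : ℝ×ℝ => lapF F (t,p.1,p.2) * pd (1,0,0) F (t,p.1,p.2))
          = fun p : ℝ×ℝ => μ * ((lapF F (t,p.1,p.2))^2)
              - lapF F (t,p.1,p.2) * PF μ F (t,p.1,p.2) := by
        funext p; unfold PF; ring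
      have cc5 : Continuous (fun p : ℝ×ℝ => μ * ((lapF F (t,p.1,p.2))^2)) :=
        continuous_const.mul ((((lapF_contDiff hFs).continuous.comp cmap)).pow 2)
      have cc6 : Continuous (fun p : ℝ×ℝ => lapF F (t,p.1,p.2) * PF μ F (t,p.1,p.2)) :=
        (((lapF_contDiff hFs).continuous.comp cmap)).mul
          ((PF_contDiff hFs μ).continuous.comp cmap)
      rw [e5, TI_sub cc5 cc6, TI_const_mul]
      rfl
    rw [← e3] at e4
    linarith [e4]
  rw [← e1]
  exact h0

end energy
section freq

variable {F : ℝ × ℝ × ℝ → ℝ} {μ : ℝ}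

lemma Et_nonneg (t : ℝ) : 0 ≤ Et F t := TI_nonneg (fun p => sq_nonneg _)
lemma Dt_nonneg (t : ℝ) : 0 ≤ Dt F t :=
  TI_nonneg (fun p => add_nonneg (sq_nonneg _) (sq_nonneg _))
lemma Qt_nonneg (t : ℝ) : 0 ≤ Qt F t := TI_nonneg (fun p => sq_nonneg _)

lemma Rt_nonneg (t : ℝ) : 0 ≤ TI (fun p => PF μ F (t,p.1,p.2)^2) :=
  TI_nonneg (fun p => sq_nonneg _)

lemma Rt_bound (hFs : ContDiff ℝ (⊤ : ℕ∞) F) {M₀ : ℝ} {t : ℝ}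
    (hPt : ∀ x y, PF μ F (t,x,y)^2
      ≤ 2*M₀^2*(pd (0,1,0) F (t,x,y)^2 + pd (0,0,1) F (t,x,y)^2)) :
    TI (fun p => PF μ F (t,p.1,p.2)^2) ≤ 2*M₀^2 * Dt F t := by
  have cmap : Continuous (fun p : ℝ × ℝ => ((t, p.1, p.2) : ℝ × ℝ × ℝ)) := by continuity
  have cP : Continuous (fun p : ℝ×ℝ => PF μ F (t,p.1,p.2)^2) :=
    (((PF_contDiff hFs μ).continuous.comp cmap)).pow 2
  have cD : Continuous (fun p : ℝ×ℝ =>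
      2*M₀^2*(pd (0,1,0) F (t,p.1,p.2)^2 + pd (0,0,1) F (t,p.1,p.2)^2)) :=
    continuous_const.mul ((((pd_continuous _ hFs).comp cmap).pow 2).add
      (((pd_continuous _ hFs).comp cmap).pow 2))
  have h := TI_mono cP cD (fun p => hPt p.1 p.2)
  rwa [TI_const_mul] at h

lemma Dt_sq_le (hFs : ContDiff ℝ (⊤ : ℕ∞) F)
    (hFpx : ∀ t x y, F (t, x + 2*π, y) = F (t,x,y))
    (hFpy : ∀ t x y, F (t, x, y + 2*π) = F (t,x,y)) (t : ℝ) :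
    Dt F t ^ 2 ≤ Et F t * Qt F t := by
  have cmap : Continuous (fun p : ℝ × ℝ => ((t, p.1, p.2) : ℝ × ℝ × ℝ)) := by continuity
  have cF : Continuous (fun p : ℝ×ℝ => F (t,p.1,p.2)) := hFs.continuous.comp cmap
  have cL : Continuous (fun p : ℝ×ℝ => lapF F (t,p.1,p.2)) :=
    (lapF_contDiff hFs).continuous.comp cmap
  have habs := TI_abs_cauchy_schwarz cF cL
  rw [Dt_eq hFs hFpx hFpy t, abs_neg, abs_of_nonneg (Dt_nonneg t)] at habs
  have hE := Et_nonneg (F := F) t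
  have hQ := Qt_nonneg (F := F) t
  have eE : TI (fun p : ℝ×ℝ => F (t,p.1,p.2)^2) = Et F t := rfl
  have eQ : TI (fun p : ℝ×ℝ => lapF F (t,p.1,p.2)^2) = Qt F t := rfl
  rw [eE, eQ] at habs
  have h2 : Dt F t ^ 2 ≤ (Real.sqrt (Et F t) * Real.sqrt (Qt F t))^2 := by
    have := Dt_nonneg (F := F) t
    nlinarith [habs, Real.sqrt_nonneg (Et F t), Real.sqrt_nonneg (Qt F t),
      mul_nonneg (Real.sqrt_nonneg (Et F t)) (Real.sqrt_nonneg (Qt F t))]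
  calc Dt F t ^2 ≤ (Real.sqrt (Et F t) * Real.sqrt (Qt F t))^2 := h2
  _ = Et F t * Qt F t := by
    rw [mul_pow, Real.sq_sqrt hE, Real.sq_sqrt hQ]

/-- abstract AM-GM : `2ab ≤ μ a² + b²/μ`. -/
lemma amgm {a b : ℝ} (hμ : 0 < μ) : 2*(a*b) ≤ μ*a^2 + b^2/μ := by
  have h : μ*a^2 + b^2/μ - 2*(a*b) = (μ*a - b)^2/μ := by field_simp; ring
  nlinarith [div_nonneg (sq_nonneg (μ*a - b)) hμ.le]

/-- the frequency-function differential inequality. -/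
lemma freq_ineq (hFs : ContDiff ℝ (⊤ : ℕ∞) F)
    (hFpx : ∀ t x y, F (t, x + 2*π, y) = F (t,x,y))
    (hFpy : ∀ t x y, F (t, x, y + 2*π) = F (t,x,y))
    (hμ : 0 < μ) {M₀ t : ℝ}
    (hPt : ∀ x y, PF μ F (t,x,y)^2
      ≤ 2*M₀^2*(pd (0,1,0) F (t,x,y)^2 + pd (0,0,1) F (t,x,y)^2))
    (hE : 0 < Et F t) :
    Et F t * (-(2*μ) * Qt F t + 2 * TI (fun p => lapF F (t,p.1,p.2) * PF μ F (t,p.1,p.2)))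
      - Dt F t * (-(2*μ) * Dt F t - 2 * TI (fun p => F (t,p.1,p.2) * PF μ F (t,p.1,p.2)))
    ≤ (2*M₀^2/μ + 1) * (Et F t * Dt F t) := by
  have cmap : Continuous (fun p : ℝ × ℝ => ((t, p.1, p.2) : ℝ × ℝ × ℝ)) := by continuity
  have cF : Continuous (fun p : ℝ×ℝ => F (t,p.1,p.2)) := hFs.continuous.comp cmap
  have cL : Continuous (fun p : ℝ×ℝ => lapF F (t,p.1,p.2)) :=
    (lapF_contDiff hFs).continuous.comp cmap
  have cP : Continuous (fun p : ℝ×ℝ => PF μ F (t,p.1,p.2)) :=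
    (PF_contDiff hFs μ).continuous.comp cmap
  set E := Et F t with hEdef
  set D := Dt F t with hDdef
  set Q := Qt F t with hQdef
  set IP1 := TI (fun p => F (t,p.1,p.2) * PF μ F (t,p.1,p.2)) with hIP1
  set IP2 := TI (fun p => lapF F (t,p.1,p.2) * PF μ F (t,p.1,p.2)) with hIP2
  set R := TI (fun p => PF μ F (t,p.1,p.2)^2) with hR
  set l := D / E with hl
  have hD0 : 0 ≤ D := Dt_nonneg t
  have hQ0 : 0 ≤ Q := Qt_nonneg t
  have hR0 : 0 ≤ R := Rt_nonneg t
  have hRb : R ≤ 2*M₀^2 * D := Rt_bound hFs hPt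
  -- the auxiliary function w = Δ + l F
  have cw : Continuous (fun p : ℝ×ℝ => lapF F (t,p.1,p.2) + l * F (t,p.1,p.2)) :=
    cL.add (continuous_const.mul cF)
  set W2 := TI (fun p => (lapF F (t,p.1,p.2) + l * F (t,p.1,p.2))^2) with hW2def
  have hW20 : 0 ≤ W2 := TI_nonneg (fun p => sq_nonneg _)
  have hW2 : W2 = Q + 2*l*(-D) + l^2*E := by
    rw [hW2def]
    have e1 : (fun p : ℝ×ℝ => (lapF F (t,p.1,p.2) + l * F (t,p.1,p.2))^2)
        = fun p : ℝ×ℝ => lapF F (t,p.1,p.2)^2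
            + ((2*l) * (F (t,p.1,p.2) * lapF F (t,p.1,p.2))
              + (l^2) * (F (t,p.1,p.2)^2)) := by
      funext p; ring
    rw [e1, TI_add (cL.fun_pow 2) ((continuous_const.fun_mul (cF.fun_mul cL)).fun_add
      (continuous_const.fun_mul (cF.fun_pow 2))), TI_add (continuous_const.fun_mul (cF.fun_mul cL))
      (continuous_const.fun_mul (cF.fun_pow 2)), TI_const_mul, TI_const_mul,
      Dt_eq hFs hFpx hFpy t]
    have eQ : TI (fun b : ℝ×ℝ => lapF F (t,b.1,b.2)^2) = Q := rfl
    have eE : TI (fun x : ℝ×ℝ => F (t,x.1,x.2)^2) = E := rfl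
    rw [eQ, eE]
    ring
  have hEne : E ≠ 0 := ne_of_gt hE
  have hlE : l * E = D := by rw [hl]; exact div_mul_cancel₀ D hEne
  have hEW2 : E * W2 = E * Q - D^2 := by
    calc E * W2 = E*Q - 2*((l*E)*D) + (l*E)^2 * 1 := by rw [hW2]; ring
    _ = E * Q - D^2 := by rw [hlE]; ring
  have hwP : TI (fun p => (lapF F (t,p.1,p.2) + l * F (t,p.1,p.2)) * PF μ F (t,p.1,p.2))
      = IP2 + l * IP1 := by
    have e1 : (fun p : ℝ×ℝ => (lapF F (t,p.1,p.2) + l * F (t,p.1,p.2)) * PF μ F (t,p.1,p.2))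
        = fun p : ℝ×ℝ => lapF F (t,p.1,p.2) * PF μ F (t,p.1,p.2)
            + l * (F (t,p.1,p.2) * PF μ F (t,p.1,p.2)) := by
      funext p; ring
    rw [e1, TI_add (cL.fun_mul cP) (continuous_const.fun_mul (cF.fun_mul cP)), TI_const_mul]
  have hCS : TI (fun p => (lapF F (t,p.1,p.2) + l * F (t,p.1,p.2)) * PF μ F (t,p.1,p.2))
      ≤ Real.sqrt W2 * Real.sqrt R := TI_cauchy_schwarz cw cP
  have hAM : 2 * (Real.sqrt W2 * Real.sqrt R) ≤ μ * W2 + R / μ := by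
    have := amgm (a := Real.sqrt W2) (b := Real.sqrt R) hμ
    rwa [Real.sq_sqrt hW20, Real.sq_sqrt hR0] at this
  -- main chain
  have hDIP : D * IP1 = E * (l * IP1) := by rw [← hlE]; ring
  have step1 : E * (-(2*μ) * Q + 2 * IP2) - D * (-(2*μ) * D - 2 * IP1)
      = -(2*μ) * (E * W2) + 2 * E * (IP2 + l * IP1) := by
    rw [hEW2]
    linear_combination (2:ℝ) * hDIP
  rw [step1, ← hwP]
  have hE0 : (0:ℝ) ≤ E := hE.le
  have step2 : 2 * E * TI (fun p => (lapF F (t,p.1,p.2) + l * F (t,p.1,p.2)) * PF μ F (t,p.1,p.2))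
      ≤ E * (μ * W2 + R / μ) := by
    calc 2 * E * TI (fun p => (lapF F (t,p.1,p.2) + l * F (t,p.1,p.2)) * PF μ F (t,p.1,p.2))
        ≤ 2 * E * (Real.sqrt W2 * Real.sqrt R) := by
          apply mul_le_mul_of_nonneg_left hCS (by linarith)
    _ = E * (2 * (Real.sqrt W2 * Real.sqrt R)) := by ring
    _ ≤ E * (μ * W2 + R / μ) := mul_le_mul_of_nonneg_left hAM hE0
  have step3 : E * R / μ ≤ (2*M₀^2/μ) * (E * D) := by
    have h1 : E * R ≤ E * (2*M₀^2 * D) := mul_le_mul_of_nonneg_left hRb hE0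
    have e : (2*M₀^2/μ) * (E*D) = (E * (2*M₀^2 * D))/μ := by ring
    rw [e]
    gcongr
  have : -(2*μ) * (E * W2) + E * (μ * W2 + R/μ) ≤ (2*M₀^2/μ) * (E*D) := by
    have hEW20 : 0 ≤ E * W2 := mul_nonneg hE0 hW20
    have : E * (μ * W2 + R/μ) = μ * (E * W2) + E * R/μ := by ring
    rw [this]
    nlinarith [step3, hμ, hEW20]
  have hED : 0 ≤ E * D := mul_nonneg hE0 hD0
  calc -(2*μ) * (E * W2) + 2 * E * TI (fun p =>
        (lapF F (t,p.1,p.2) + l * F (t,p.1,p.2)) * PF μ F (t,p.1,p.2))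
      ≤ -(2*μ) * (E * W2) + E * (μ * W2 + R/μ) := by linarith [step2]
  _ ≤ (2*M₀^2/μ) * (E*D) := this
  _ ≤ (2*M₀^2/μ + 1) * (E*D) := by nlinarith [hED]

end freq
section ode

variable {F : ℝ × ℝ × ℝ → ℝ} {μ : ℝ}

lemma IP1_bound (hFs : ContDiff ℝ (⊤ : ℕ∞) F) {M₀ t : ℝ} (hM₀ : 0 ≤ M₀)
    (hPt : ∀ x y, PF μ F (t,x,y)^2
      ≤ 2*M₀^2*(pd (0,1,0) F (t,x,y)^2 + pd (0,0,1) F (t,x,y)^2)) :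
    TI (fun p => F (t,p.1,p.2) * PF μ F (t,p.1,p.2)) ≤ M₀ * (Et F t + Dt F t) := by
  have cmap : Continuous (fun p : ℝ × ℝ => ((t, p.1, p.2) : ℝ × ℝ × ℝ)) := by continuity
  have cF : Continuous (fun p : ℝ×ℝ => F (t,p.1,p.2)) := hFs.continuous.comp cmap
  have cP : Continuous (fun p : ℝ×ℝ => PF μ F (t,p.1,p.2)) :=
    (PF_contDiff hFs μ).continuous.comp cmap
  have habs := TI_abs_cauchy_schwarz cF cP
  have eE : TI (fun p : ℝ×ℝ => F (t,p.1,p.2)^2) = Et F t := rfl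
  rw [eE] at habs
  set E := Et F t
  set D := Dt F t with hD
  set R := TI (fun p : ℝ×ℝ => PF μ F (t,p.1,p.2)^2) with hRdef
  have hE0 : 0 ≤ E := Et_nonneg t
  have hD0 : 0 ≤ D := Dt_nonneg t
  have hR0 : 0 ≤ R := Rt_nonneg t
  have hRb : R ≤ 2*M₀^2 * D := Rt_bound hFs hPt
  have h1 : Real.sqrt E * Real.sqrt R = Real.sqrt (E * R) := (Real.sqrt_mul hE0 R).symm
  have h2 : E * R ≤ (M₀ * (E + D))^2 := by nlinarith [sq_nonneg (E - D), sq_nonneg (E+D)]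
  have h3 : Real.sqrt (E * R) ≤ M₀ * (E + D) := by
    calc Real.sqrt (E * R) ≤ Real.sqrt ((M₀ * (E + D))^2) := Real.sqrt_le_sqrt h2
    _ = |M₀ * (E + D)| := Real.sqrt_sq_eq_abs _
    _ = M₀ * (E + D) := abs_of_nonneg (by positivity)
  calc TI (fun p => F (t,p.1,p.2) * PF μ F (t,p.1,p.2))
      ≤ |TI (fun p => F (t,p.1,p.2) * PF μ F (t,p.1,p.2))| := le_abs_self _
  _ ≤ Real.sqrt E * Real.sqrt R := habs
  _ = Real.sqrt (E * R) := h1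
  _ ≤ M₀ * (E + D) := h3

set_option maxHeartbeats 2000000 in
/-- The double-exponential lower bound for the energy, assuming positivity at `t = 0`. -/
lemma E_lower_bound (hFs : ContDiff ℝ (⊤ : ℕ∞) F)
    (hFpx : ∀ t x y, F (t, x + 2*π, y) = F (t,x,y))
    (hFpy : ∀ t x y, F (t, x, y + 2*π) = F (t,x,y))
    (hμ : 0 < μ) {M₀ : ℝ} (hM₀ : 0 ≤ M₀)
    (hP : ∀ t, 0 ≤ t → ∀ x y, PF μ F (t,x,y)^2
      ≤ 2*M₀^2*(pd (0,1,0) F (t,x,y)^2 + pd (0,0,1) F (t,x,y)^2))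
    (hE0 : 0 < Et F 0) :
    ∀ t, 0 ≤ t →
      Et F 0 * Real.exp (-(((2*μ+2*M₀) * (Dt F 0 / Et F 0) / (2*M₀^2/μ + 1))
          * Real.exp ((2*M₀^2/μ + 1)*t)) - (2*M₀)*t) ≤ Et F t := by
  set K : ℝ := 2*M₀^2/μ + 1 with hKdef
  have hK : 0 < K := by
    have h0 : (0:ℝ) ≤ 2*M₀^2/μ := by positivity
    rw [hKdef]; linarith
  set a : ℝ := 2*μ + 2*M₀ with hadef
  have ha : 0 ≤ a := by rw [hadef]; linarith
  set b : ℝ := 2*M₀ with hbdef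
  have hb : 0 ≤ b := by rw [hbdef]; linarith
  set Λ0 : ℝ := Dt F 0 / Et F 0 with hΛdef
  have hΛ0 : 0 ≤ Λ0 := div_nonneg (Dt_nonneg 0) hE0.le
  set β : ℝ := a * Λ0 / K with hβdef
  have hβ : 0 ≤ β := by positivity
  set φ : ℝ → ℝ := fun t => Et F 0 * Real.exp (-(β * Real.exp (K*t)) - b*t) with hφdef
  have hφpos : ∀ t, 0 < φ t := fun t => mul_pos hE0 (Real.exp_pos _)
  have hφcont : Continuous φ := by
    apply continuous_const.mul
    apply Real.continuous_exp.comp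
    continuity
  have hEc : Continuous (Et F) := by
    rw [continuous_iff_continuousAt]
    exact fun t => (hasDerivAt_Et (μ := μ) hFs hFpx hFpy t).continuousAt
  have hDc : Continuous (Dt F) := by
    rw [continuous_iff_continuousAt]
    exact fun t => (hasDerivAt_Dt (μ := μ) hFs hFpx hFpy t).continuousAt
  -- conditional lower bound
  have hlow : ∀ T, 0 ≤ T → (∀ s, s ∈ Icc 0 T → 0 < Et F s) →
      ∀ t, t ∈ Icc (0:ℝ) T → φ t ≤ Et F t := by
    intro T hT hpos
    -- Step A: frequency growth bound
    set g : ℝ → ℝ := fun s => Dt F s / Et F s * Real.exp (-(K*s)) with hgdef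
    have hgd : ∀ s, 0 ≤ s → 0 < Et F s → HasDerivAt g
        (((-(2*μ) * Qt F s + 2 * TI (fun p => lapF F (s,p.1,p.2) * PF μ F (s,p.1,p.2)))
            * Et F s
          - Dt F s * (-(2*μ) * Dt F s - 2 * TI (fun p => F (s,p.1,p.2) * PF μ F (s,p.1,p.2))))
          / (Et F s)^2 * Real.exp (-(K*s))
          + Dt F s / Et F s * (Real.exp (-(K*s)) * -(K*1))) s := by
      intro s _ hEs
      have h1 := (hasDerivAt_Dt (μ := μ) hFs hFpx hFpy s).div
        (hasDerivAt_Et (μ := μ) hFs hFpx hFpy s) (ne_of_gt hEs)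
      have h2 : HasDerivAt (fun s => Real.exp (-(K*s))) (Real.exp (-(K*s)) * -(K*1)) s :=
        (((hasDerivAt_id s).const_mul K).neg).exp
      exact h1.mul h2
    have hgderiv_nonpos : ∀ s, s ∈ Ioo (0:ℝ) T → (∀ s', s' ∈ Icc 0 T → 0 < Et F s') →
        deriv g s ≤ 0 := by
      intro s hs hpos'
      have hs0 : (0:ℝ) ≤ s := hs.1.le
      have hEs : 0 < Et F s := hpos' s ⟨hs.1.le, hs.2.le⟩
      rw [(hgd s hs0 hEs).deriv]
      have hfreq := freq_ineq hFs hFpx hFpy hμ (hP s hs0) hEs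
      set E' := -(2*μ) * Dt F s - 2 * TI (fun p => F (s,p.1,p.2) * PF μ F (s,p.1,p.2))
      set D' := -(2*μ) * Qt F s + 2 * TI (fun p => lapF F (s,p.1,p.2) * PF μ F (s,p.1,p.2))
      set Es := Et F s
      set Ds := Dt F s
      have hnum : D' * Es - Ds * E' - K * (Ds * Es) ≤ 0 := by
        have : Es * D' - Ds * E' ≤ K * (Es * Ds) := hfreq
        nlinarith [this]
      have hcomb : (D' * Es - Ds * E')/Es^2 * Real.exp (-(K*s))
          + Ds / Es * (Real.exp (-(K*s)) * -(K*1))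
          = ((D' * Es - Ds * E' - K * (Ds * Es))/Es^2) * Real.exp (-(K*s)) := by
        field_simp
        ring
      rw [hcomb]
      apply mul_nonpos_of_nonpos_of_nonneg _ (Real.exp_pos _).le
      rw [div_eq_mul_inv]
      exact mul_nonpos_of_nonpos_of_nonneg hnum (by positivity)
    have hexpc : Continuous (fun s : ℝ => Real.exp (-(K*s))) :=
      Real.continuous_exp.comp ((continuous_const.mul continuous_id).neg)
    have hgc : ContinuousOn (fun s => Dt F s / Et F s * Real.exp (-(K*s))) (Icc 0 T) :=
      (hDc.continuousOn.div hEc.continuousOn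
        (fun s hs => ne_of_gt (hpos s hs))).mul hexpc.continuousOn
    have hganti : AntitoneOn g (Icc 0 T) := by
      apply antitoneOn_of_deriv_nonpos (convex_Icc 0 T)
      · exact hgc
      · intro s hs
        rw [interior_Icc] at hs
        exact ((hgd s hs.1.le (hpos s ⟨hs.1.le, hs.2.le⟩)).differentiableAt).differentiableWithinAt
      · intro s hs
        rw [interior_Icc] at hs
        exact hgderiv_nonpos s hs hpos
    have hΛB : ∀ t, t ∈ Icc (0:ℝ) T → Dt F t ≤ Λ0 * Real.exp (K*t) * Et F t := by
      intro t ht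
      have hEt := hpos t ht
      have h1 : g t ≤ g 0 := hganti (left_mem_Icc.mpr hT) ht ht.1
      have hg0 : g 0 = Λ0 := by
        rw [hgdef]
        simp [hΛdef]
      rw [hg0] at h1
      have hepos := Real.exp_pos (K*t)
      have h2 : Dt F t / Et F t ≤ Λ0 * Real.exp (K*t) := by
        have h3 := mul_le_mul_of_nonneg_right h1 hepos.le
        have h4 : Dt F t / Et F t * Real.exp (-(K*t)) * Real.exp (K*t)
            = Dt F t / Et F t := by
          rw [mul_assoc, ← Real.exp_add]
          simp
        rw [h4] at h3
        exact h3
      rw [div_le_iff₀ hEt] at h2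
      linarith [h2]
    -- Step B : lower bound for log E
    set hfun : ℝ → ℝ := fun s => Real.log (Et F s) + β * Real.exp (K*s) + b*s with hfdef
    have hhd : ∀ s, 0 ≤ s → 0 < Et F s → HasDerivAt hfun
        ((-(2*μ) * Dt F s - 2 * TI (fun p => F (s,p.1,p.2) * PF μ F (s,p.1,p.2))) / Et F s
          + β * (Real.exp (K*s) * (K*1)) + b*1) s := by
      intro s _ hEs
      exact ((HasDerivAt.log (hasDerivAt_Et (μ := μ) hFs hFpx hFpy s) (ne_of_gt hEs)).add
        ((((hasDerivAt_id s).const_mul K).exp).const_mul β)).add ((hasDerivAt_id s).const_mul b)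
    have hmono : MonotoneOn hfun (Icc 0 T) := by
      apply monotoneOn_of_deriv_nonneg (convex_Icc 0 T)
      · have c1 : ContinuousOn (fun s => Real.log (Et F s)) (Icc 0 T) :=
          ContinuousOn.log hEc.continuousOn (fun s hs => ne_of_gt (hpos s hs))
        have c2 : Continuous (fun s : ℝ => β * Real.exp (K*s)) :=
          continuous_const.mul (Real.continuous_exp.comp (continuous_const.mul continuous_id))
        have c3 : Continuous (fun s : ℝ => b * s) := continuous_const.mul continuous_id
        exact (c1.add c2.continuousOn).add c3.continuousOn
      · intro s hs
        rw [interior_Icc] at hs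
        exact ((hhd s hs.1.le (hpos s ⟨hs.1.le, hs.2.le⟩)).differentiableAt).differentiableWithinAt
      · intro s hs
        rw [interior_Icc] at hs
        have hs0 : (0:ℝ) ≤ s := hs.1.le
        have hsI : s ∈ Icc (0:ℝ) T := ⟨hs.1.le, hs.2.le⟩
        have hEs := hpos s hsI
        rw [(hhd s hs0 hEs).deriv]
        have hIP := IP1_bound (μ := μ) hFs hM₀ (hP s hs0)
        have hDb := hΛB s hsI
        have hβK : β * K = a * Λ0 := by
          rw [hβdef]
          field_simp
        have hE' : -(2*μ) * Dt F s - 2 * TI (fun p => F (s,p.1,p.2) * PF μ F (s,p.1,p.2))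
            ≥ -((a * (Λ0 * Real.exp (K*s)) + b) * Et F s) := by
          have h5 : a * Dt F s ≤ a * (Λ0 * Real.exp (K*s) * Et F s) :=
            mul_le_mul_of_nonneg_left hDb ha
          have h6 : -(2*μ) * Dt F s - 2 * TI (fun p => F (s,p.1,p.2) * PF μ F (s,p.1,p.2))
              ≥ -(a * Dt F s + b * Et F s) := by
            rw [hadef, hbdef]
            nlinarith [hIP]
          nlinarith [h5, h6]
        have hdivge : (-(2*μ) * Dt F s - 2 * TI (fun p => F (s,p.1,p.2)
              * PF μ F (s,p.1,p.2))) / Et F s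
            ≥ -(a * (Λ0 * Real.exp (K*s)) + b) := by
          rw [ge_iff_le, le_div_iff₀ hEs]
          nlinarith [hE']
        have : β * (Real.exp (K*s) * (K*1)) = a * (Λ0 * Real.exp (K*s)) := by
          have : β * (Real.exp (K*s) * (K*1)) = (β * K) * Real.exp (K*s) := by ring
          rw [this, hβK]
          ring
        rw [this]
        linarith [hdivge]
    intro t ht
    have h7 : hfun 0 ≤ hfun t := hmono (left_mem_Icc.mpr hT) ht ht.1
    have h8 : hfun 0 = Real.log (Et F 0) + β := by
      rw [hfdef]
      simp
    have h9 : Real.log (Et F t) ≥ Real.log (Et F 0) - β * Real.exp (K*t) - b*t := by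
      have := h7
      rw [h8] at this
      rw [hfdef] at this
      simp only at this
      nlinarith [this, hβ]
    have hEt := hpos t ht
    calc φ t = Real.exp (Real.log (Et F 0) + (-(β * Real.exp (K*t)) - b*t)) := by
          rw [hφdef, Real.exp_add, Real.exp_log hE0]
    _ ≤ Real.exp (Real.log (Et F t)) := by
          apply Real.exp_le_exp.mpr
          linarith [h9]
    _ = Et F t := Real.exp_log hEt
  -- bootstrap positivity
  intro t ht
  have main : φ t ≤ Et F t := by
    by_cases hpos_all : ∀ s, s ∈ Icc 0 t → 0 < Et F s
    · exact hlow t ht hpos_all t ⟨ht, le_refl t⟩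
    · exfalso
      push_neg at hpos_all
      obtain ⟨s₀, hs₀, hEs₀⟩ := hpos_all
      set S := {s : ℝ | 0 ≤ s ∧ Et F s ≤ 0} with hSdef
      have hSne : S.Nonempty := ⟨s₀, hs₀.1, hEs₀⟩
      have hScl : IsClosed S := by
        have : S = Ici (0:ℝ) ∩ Et F ⁻¹' (Iic 0) := by
          ext s
          simp [hSdef, mem_Ici, mem_Iic]
        rw [this]
        exact isClosed_Ici.inter (isClosed_Iic.preimage hEc)
      have hSbdd : BddBelow S := ⟨0, fun x hx => hx.1⟩
      set t₁ := sInf S with ht₁def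
      have ht₁S : t₁ ∈ S := hScl.csInf_mem hSne hSbdd
      have ht₁0 : 0 < t₁ := by
        rcases eq_or_lt_of_le ht₁S.1 with h | h
        · exfalso
          have := ht₁S.2
          rw [← h] at this
          linarith
        · exact h
      have hmid : ∀ s, s ∈ Ico (0:ℝ) t₁ → 0 < Et F s := by
        intro s hs
        by_contra hns
        push_neg at hns
        have hsS : s ∈ S := ⟨hs.1, hns⟩
        have := csInf_le hSbdd hsS
        rw [← ht₁def] at this
        linarith [hs.2]
      have hIco : ∀ s, s ∈ Ico (0:ℝ) t₁ → φ s ≤ Et F s := by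
        intro s hs
        exact hlow s hs.1 (fun r hr => hmid r ⟨hr.1, lt_of_le_of_lt hr.2 hs.2⟩)
          s ⟨hs.1, le_refl s⟩
      have hCl : IsClosed {s : ℝ | φ s ≤ Et F s} := isClosed_le hφcont hEc
      have ht₁mem : t₁ ∈ {s : ℝ | φ s ≤ Et F s} := by
        have hsub : Ico (0:ℝ) t₁ ⊆ {s : ℝ | φ s ≤ Et F s} := fun s hs => hIco s hs
        have hcls : t₁ ∈ closure (Ico (0:ℝ) t₁) := by
          rw [closure_Ico (ne_of_lt ht₁0)]
          exact right_mem_Icc.mpr ht₁0.le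
        exact hCl.closure_subset ((closure_mono hsub) hcls)
      have hle : φ t₁ ≤ Et F t₁ := ht₁mem
      have := hφpos t₁
      linarith [ht₁S.2]
  exact main

end ode
/-- initial energy is positive when the data is not identically zero. -/
lemma Et_zero_pos {F : ℝ × ℝ × ℝ → ℝ} (hFc : Continuous F)
    (hFpx : ∀ t x y, F (t, x + 2*π, y) = F (t,x,y))
    (hFpy : ∀ t x y, F (t, x, y + 2*π) = F (t,x,y))
    (hnz : ∃ x y, F (0,x,y) ≠ 0) : 0 < Et F 0 := by
  have h2π : (0:ℝ) < 2 * π := by positivity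
  have hππ : (-π : ℝ) < π := by linarith [pi_pos]
  obtain ⟨x₀, y₀, h₀⟩ := hnz
  set g0 : ℝ × ℝ → ℝ := fun p => F (0, p.1, p.2) with hg0def
  have cg0 : Continuous g0 := hFc.comp (by continuity)
  set U : Set (ℝ × ℝ) := {p | g0 p ≠ 0} with hUdef
  have hUopen : IsOpen U := by
    have : U = g0 ⁻¹' ({0}ᶜ) := rfl
    rw [this]
    exact (isOpen_compl_singleton).preimage cg0
  -- find a point of U inside the fundamental domain
  have hx : Function.Periodic (fun x => F (0, x, y₀)) (2*π) := fun x => hFpx 0 x y₀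
  obtain ⟨x₁, hx₁, hx₁e⟩ := hx.exists_mem_Ico h2π x₀ (-π)
  have hy : Function.Periodic (fun y => F (0, x₁, y)) (2*π) := fun y => hFpy 0 x₁ y
  obtain ⟨y₁, hy₁, hy₁e⟩ := hy.exists_mem_Ico h2π y₀ (-π)
  rw [show -π + 2*π = π by ring] at hx₁ hy₁
  have hq₀ : ((x₁, y₁) : ℝ × ℝ) ∈ U := by
    have : F (0, x₁, y₁) ≠ 0 := by rw [← hy₁e, ← hx₁e]; exact h₀
    exact this
  have hq₀c : ((x₁, y₁) : ℝ × ℝ) ∈ closure (Ioo (-π) π ×ˢ Ioo (-π) π) := by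
    rw [closure_prod_eq, closure_Ioo (ne_of_lt hππ)]
    exact ⟨Ico_subset_Icc_self hx₁, Ico_subset_Icc_self hy₁⟩
  obtain ⟨q, hqU, hqI⟩ := _root_.mem_closure_iff.mp hq₀c U hUopen hq₀
  -- the open set U ∩ Ioo² has positive measure
  have hVopen : IsOpen (U ∩ Ioo (-π) π ×ˢ Ioo (-π) π) :=
    hUopen.inter ((isOpen_Ioo).prod (isOpen_Ioo))
  have hVne : (U ∩ Ioo (-π) π ×ˢ Ioo (-π) π).Nonempty := ⟨q, hqU, hqI⟩
  have hVpos : 0 < (volume.prod volume) (U ∩ Ioo (-π) π ×ˢ Ioo (-π) π) :=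
    hVopen.measure_pos _ hVne
  have hνU : 0 < νT U := by
    rw [νT_eq, Measure.restrict_apply hUopen.measurableSet]
    refine lt_of_lt_of_le hVpos (measure_mono ?_)
    intro p hp
    exact ⟨hp.1, ⟨Ioo_subset_Ioc_self hp.2.1, Ioo_subset_Ioc_self hp.2.2⟩⟩
  -- conclude
  have hsupp : Function.support (fun p : ℝ × ℝ => g0 p ^ 2) = U := by
    ext p
    simp [Function.mem_support, hUdef, pow_eq_zero_iff]
  have hint : Integrable (fun p : ℝ × ℝ => g0 p ^ 2) νT := TI_integrable (cg0.pow 2)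
  have := (integral_pos_iff_support_of_nonneg (fun p => sq_nonneg (g0 p)) hint).mpr
    (by rw [hsupp]; exact hνU)
  exact this

set_option maxHeartbeats 2000000 in
/-- **Double-exponential lower bound for advection–diffusion with a bounded drift.**
For `μ > 0`, a bounded vector field `u` on `𝕋²`, and a smooth, not identically zero solution
of `∂_t ρ + u·∇ρ = μΔρ`, there is `C > 0`, depending only on `μ`, `‖u‖_{L^∞}` and `ρ(0,·)`,
with `‖ρ(t)‖_{L²} ≥ C exp(−C exp(Ct))` for all `t ≥ 0`. -/
theorem double_exponential_lower_bound
    (μ : ℝ) (hμ : 0 < μ)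
    (u : ℝ → ℝ → ℝ → ℝ × ℝ) (ρ : ℝ → ℝ → ℝ → ℝ)
    (hubd : ∃ M : ℝ, ∀ t x y, ‖u t x y‖ ≤ M)
    (huperx : ∀ t x y, u t (x + 2 * π) y = u t x y)
    (hupery : ∀ t x y, u t x (y + 2 * π) = u t x y)
    (hsmooth : ContDiff ℝ (⊤ : ℕ∞) (fun p : ℝ × ℝ × ℝ => ρ p.1 p.2.1 p.2.2))
    (hperx : ∀ t x y, ρ t (x + 2 * π) y = ρ t x y)
    (hpery : ∀ t x y, ρ t x (y + 2 * π) = ρ t x y)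
    (hpde : ∀ t, 0 ≤ t → ∀ x y,
      deriv (fun s => ρ s x y) t +
          (u t x y).1 * deriv (fun x' => ρ t x' y) x +
          (u t x y).2 * deriv (fun y' => ρ t x y') y =
        μ * (iteratedDeriv 2 (fun x' => ρ t x' y) x + iteratedDeriv 2 (fun y' => ρ t x y') y))
    (hnz : ∃ x y, ρ 0 x y ≠ 0) :
    ∃ C : ℝ, 0 < C ∧ ∀ t, 0 ≤ t →
      C * Real.exp (-C * Real.exp (C * t)) ≤ l2Norm (ρ t) := by
  obtain ⟨M₀, hM₀b⟩ := hubd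
  have hM₀ : 0 ≤ M₀ := le_trans (norm_nonneg _) (hM₀b 0 0 0)
  set F : ℝ × ℝ × ℝ → ℝ := fun p => ρ p.1 p.2.1 p.2.2 with hFdef
  have hFs : ContDiff ℝ (⊤ : ℕ∞) F := hsmooth
  have hFpx : ∀ t x y, F (t, x + 2*π, y) = F (t,x,y) := fun t x y => hperx t x y
  have hFpy : ∀ t x y, F (t, x, y + 2*π) = F (t,x,y) := fun t x y => hpery t x y
  -- translate the PDE
  have hpde' : ∀ t, 0 ≤ t → ∀ x y, PF μ F (t,x,y)
      = (u t x y).1 * pd (0,1,0) F (t,x,y) + (u t x y).2 * pd (0,0,1) F (t,x,y) := by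
    intro t ht x y
    have h := hpde t ht x y
    have e1 : deriv (fun s => ρ s x y) t = pd (1,0,0) F (t,x,y) :=
      (hasDerivAt_t hFs t x y).deriv
    have e2 : deriv (fun x' => ρ t x' y) x = pd (0,1,0) F (t,x,y) :=
      (hasDerivAt_x hFs t x y).deriv
    have e3 : deriv (fun y' => ρ t x y') y = pd (0,0,1) F (t,x,y) :=
      (hasDerivAt_y hFs t x y).deriv
    have e4 : iteratedDeriv 2 (fun x' => ρ t x' y) x = pd (0,1,0) (pd (0,1,0) F) (t,x,y) := by
      rw [show (2:ℕ) = 1 + 1 from rfl, iteratedDeriv_succ, iteratedDeriv_one]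
      have hd : deriv (fun x' => ρ t x' y) = fun x' => pd (0,1,0) F (t,x',y) :=
        funext fun x' => (hasDerivAt_x hFs t x' y).deriv
      rw [hd]
      exact (hasDerivAt_x (pd_contDiff _ hFs) t x y).deriv
    have e5 : iteratedDeriv 2 (fun y' => ρ t x y') y = pd (0,0,1) (pd (0,0,1) F) (t,x,y) := by
      rw [show (2:ℕ) = 1 + 1 from rfl, iteratedDeriv_succ, iteratedDeriv_one]
      have hd : deriv (fun y' => ρ t x y') = fun y' => pd (0,0,1) F (t,x,y') :=
        funext fun y' => (hasDerivAt_y hFs t x y').deriv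
      rw [hd]
      exact (hasDerivAt_y (pd_contDiff _ hFs) t x y).deriv
    rw [e1, e2, e3, e4, e5] at h
    unfold PF lapF
    linarith [h]
  -- the pointwise bound on the drift term
  have hP2 : ∀ t, 0 ≤ t → ∀ x y, PF μ F (t,x,y)^2
      ≤ 2*M₀^2*(pd (0,1,0) F (t,x,y)^2 + pd (0,0,1) F (t,x,y)^2) := by
    intro t ht x y
    rw [hpde' t ht x y]
    have h1 : |(u t x y).1| ≤ M₀ := le_trans (norm_fst_le (u t x y)) (hM₀b t x y)
    have h2 : |(u t x y).2| ≤ M₀ := le_trans (norm_snd_le (u t x y)) (hM₀b t x y)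
    have h1' : (u t x y).1^2 ≤ M₀^2 := by
      rw [← sq_abs]; exact pow_le_pow_left₀ (abs_nonneg _) h1 2
    have h2' : (u t x y).2^2 ≤ M₀^2 := by
      rw [← sq_abs]; exact pow_le_pow_left₀ (abs_nonneg _) h2 2
    set A := pd (0,1,0) F (t,x,y)
    set B := pd (0,0,1) F (t,x,y)
    nlinarith [sq_nonneg ((u t x y).1 * A - (u t x y).2 * B),
      mul_le_mul_of_nonneg_right h1' (sq_nonneg A),
      mul_le_mul_of_nonneg_right h2' (sq_nonneg B)]
  have hE0pos : 0 < Et F 0 := Et_zero_pos hFs.continuous hFpx hFpy hnz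
  have hmain := E_lower_bound hFs hFpx hFpy hμ hM₀ hP2 hE0pos
  -- constants
  set E0 : ℝ := Et F 0 with hE0def
  set K : ℝ := 2*M₀^2/μ + 1 with hKdef
  have hK1 : 1 ≤ K := by
    have h0 : (0:ℝ) ≤ 2*M₀^2/μ := by positivity
    rw [hKdef]; linarith
  set a : ℝ := 2*μ + 2*M₀ with hadef
  have ha : 0 ≤ a := by rw [hadef]; linarith
  set b : ℝ := 2*M₀ with hbdef
  have hb : 0 ≤ b := by rw [hbdef]; linarith
  set Λ0 : ℝ := Dt F 0 / Et F 0 with hΛdef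
  have hΛ0 : 0 ≤ Λ0 := div_nonneg (Dt_nonneg 0) hE0pos.le
  set β : ℝ := a * Λ0 / K with hβdef
  have hβ : 0 ≤ β := by
    rw [hβdef]
    have : (0:ℝ) < K := by linarith
    positivity
  set C : ℝ := K + 2*β + b + 3*|Real.log E0| + 7 with hCdef
  have habs0 : 0 ≤ |Real.log E0| := abs_nonneg _
  have hC7 : 7 ≤ C := by rw [hCdef]; linarith
  have hC : 0 < C := by linarith
  refine ⟨C, hC, fun t ht => ?_⟩
  -- identify the L² norm with the energy
  have cmap : Continuous (fun p : ℝ × ℝ => ((t, p.1, p.2) : ℝ × ℝ × ℝ)) := by continuity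
  have hid : l2NormSq (ρ t) = Et F t := by
    have := TI_eq_iterated (g := fun p : ℝ×ℝ => F (t,p.1,p.2)^2)
      ((hFs.continuous.comp cmap).pow 2)
    exact this.symm
  have hEt : E0 * Real.exp (-(β * Real.exp (K*t)) - b*t) ≤ Et F t := hmain t ht
  have hφpos : (0:ℝ) < E0 * Real.exp (-(β * Real.exp (K*t)) - b*t) :=
    mul_pos hE0pos (Real.exp_pos _)
  have hEtpos : 0 < Et F t := lt_of_lt_of_le hφpos hEt
  have hsq : Real.sqrt (E0 * Real.exp (-(β * Real.exp (K*t)) - b*t))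
      ≤ Real.sqrt (Et F t) := Real.sqrt_le_sqrt hEt
  have hsql : Real.sqrt (E0 * Real.exp (-(β * Real.exp (K*t)) - b*t))
      = Real.exp (Real.log E0 / 2 + (-(β * Real.exp (K*t)) - b*t)/2) := by
    rw [Real.sqrt_mul hE0pos.le, Real.exp_add, Real.exp_half, Real.exp_half,
      Real.exp_log hE0pos]
  -- the elementary inequality on constants
  have hlogC : Real.log C ≤ C/6 + 1 := by
    have h6 : Real.log 6 ≤ 2 := by
      have he : (6:ℝ) < Real.exp 2 := by
        have h9 := Real.exp_one_gt_d9
        rw [show (2:ℝ) = 1 + 1 by norm_num, Real.exp_add]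
        nlinarith
      exact (Real.log_lt_iff_lt_exp (by norm_num)).mpr he |>.le
    have hC6 : (0:ℝ) < C/6 := by linarith
    have : Real.log C = Real.log 6 + Real.log (C/6) := by
      rw [← Real.log_mul (by norm_num) (ne_of_gt hC6)]
      congr 1
      field_simp
    rw [this]
    have := Real.log_le_sub_one_of_pos hC6
    linarith
  have hexp1 : Real.exp (K*t) ≤ Real.exp (C*t) := by
    apply Real.exp_le_exp.mpr
    apply mul_le_mul_of_nonneg_right _ ht
    rw [hCdef]; linarith
  have hexp2 : (1:ℝ) ≤ Real.exp (C*t) := Real.one_le_exp (by positivity)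
  have hexp3 : C*t + 1 ≤ Real.exp (C*t) := Real.add_one_le_exp _
  set X := Real.exp (C*t) with hXdef
  set Y := Real.exp (K*t) with hYdef
  have hY0 : 0 < Y := Real.exp_pos _
  have f1 : C*Y ≤ C*X := mul_le_mul_of_nonneg_left hexp1 hC.le
  have f2 : C*(C*t) + C ≤ C*X := by
    have := mul_le_mul_of_nonneg_left hexp3 hC.le
    linarith
  have f3 : C ≤ C*X := by
    have := mul_le_mul_of_nonneg_left hexp2 hC.le
    linarith
  have f4 : 2*β*Y ≤ C*Y := by
    apply mul_le_mul_of_nonneg_right _ hY0.le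
    rw [hCdef]; linarith
  have f5 : 3*(b*t) ≤ C*(C*t) := by
    have h3b : 3*b ≤ C*C := by nlinarith
    calc 3*(b*t) = (3*b)*t := by ring
    _ ≤ (C*C)*t := mul_le_mul_of_nonneg_right h3b ht
    _ = C*(C*t) := by ring
  have f7 : -Real.log E0 ≤ |Real.log E0| := neg_le_abs _
  have f8 : 3*|Real.log E0| ≤ C - 7 := by rw [hCdef]; linarith
  -- final comparison
  clear_value X Y C β Λ0 b a K E0
  have hfin : Real.log C + (-C * X)
      ≤ Real.log E0 / 2 + (-(β * Y) - b*t)/2 := by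
    have hCX0 : 0 ≤ C*X := le_trans hC.le f3
    have g1 : β*Y ≤ C*X/2 := by linarith [f4, f1]
    have g2 : b*t ≤ (C*X - C)/3 := by linarith [f5, f2]
    have g3 : Real.log C - Real.log E0 / 2 ≤ C/6 + 1 + (C-7)/6 := by
      linarith [hlogC, f7, f8]
    linarith [g1, g2, g3, f3, hCX0]
  calc C * Real.exp (-C * X)
      = Real.exp (Real.log C + (-C * X)) := by
        rw [Real.exp_add, Real.exp_log hC]
  _ ≤ Real.exp (Real.log E0 / 2 + (-(β * Y) - b*t)/2) := Real.exp_le_exp.mpr hfin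
  _ = Real.sqrt (E0 * Real.exp (-(β * Y) - b*t)) := hsql.symm
  _ ≤ Real.sqrt (Et F t) := hsq
  _ = l2Norm (ρ t) := by rw [l2Norm, hid]
end
end
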